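/- arXiv:2604.11235 — 4 statements merged into one kernel-verified Lean document; each statement's English description precedes it below -/
import Mathlib

section
/- Let R be a ring which is left Noetherian and right Noetherian and admits a finite injective resolution as a left module over itself and a finite injective resolution as a right module over itself, and let S be a multiplicative submonoid of R contained in the center of R (so that S is a left and right Ore set in R). Then the Ore localization S⁻¹R is left Noetherian and right Noetherian and admits a finite injective resolution as a left module over itself and a finite injective resolution as a right module over itself. -/
/-!
STATEMENT 1: If `R` is left and right Noetherian and admits a finite injective
resolution as a left and as a right module over itself, and `S` is a multiplicative
submonoid of `R` contained in the center of `R` (hence a left and right Ore set),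
then the Ore localization `S⁻¹R` has the same properties.
-/

universe u

open CategoryTheory

/-- A module `M` over a ring `R` admits a finite injective resolution:
there is an exact sequence `0 → M → I⁰ → I¹ → ⋯ → Iⁿ → 0` with all `Iʲ`
injective `R`-modules. -/
def HasFiniteInjectiveResolution (R : Type u) [Ring R] (M : Type u) [AddCommGroup M]
    [Module R M] : Prop :=
  ∃ (I : InjectiveResolution (ModuleCat.of R M)) (n : ℕ),
    ∀ m : ℕ, n < m → Limits.IsZero (I.cocomplex.X m)

/-! ### Auxiliary material -/

namespace StmtAux

open OreLocalization MulOpposite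

section CentralLoc
variable {R : Type u} [Ring R] {S : Submonoid R} [OreLocalization.OreSet S]
variable {M N P : Type u} [AddCommGroup M] [AddCommGroup N] [AddCommGroup P]
variable [Module R M] [Module R N] [Module R P]

theorem exists_oreDiv (x : OreLocalization S M) : ∃ (m : M) (s : S), x = m /ₒ s := by
  induction x using OreLocalization.ind with | _ r s => exact ⟨r, s, rfl⟩

theorem oreDiv_eq_zero_iff {m : M} {s : S} :
    m /ₒ s = 0 ↔ ∃ (v : R) (_ : v * s ∈ S), v • m = 0 := by
  constructor
  · intro h
    rw [← zero_oreDiv (1 : S), oreDiv_eq_iff] at h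
    obtain ⟨u, v, h1, h2⟩ := h
    rw [smul_zero] at h1
    refine ⟨v, ?_, h1.symm⟩
    rw [OneMemClass.coe_one, mul_one] at h2
    exact h2 ▸ u.2
  · rintro ⟨v, h, hv⟩
    rw [OreLocalization.expand m s v h, hv, zero_oreDiv]

theorem central_smul_oreDiv (hc : ∀ s ∈ S, ∀ r : R, s * r = r * s) (r : R) (m : M) (s : S) :
    r • (m /ₒ s) = (r • m) /ₒ s := by
  rw [← smul_one_oreDiv_one_smul, smul_eq_mul, mul_one,
    oreDiv_smul_char r m 1 s r s (hc s s.2 r), mul_one]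

/-- localization of a linear map -/
def localMap (f : M →ₗ[R] N) :
    OreLocalization S M →ₗ[OreLocalization S R] OreLocalization S N where
  toFun := OreLocalization.liftExpand (fun m s => f m /ₒ s) (by
    intro m t s ht
    simp only [map_smul]
    exact OreLocalization.expand (f m) s t ht)
  map_add' x y := by
    induction x using OreLocalization.ind with | _ m s =>
    induction y using OreLocalization.ind with | _ m' s' =>
    rcases oreDivAddChar' m m' s s' with ⟨ra, sa, ha, ha'⟩
    rw [ha']
    rw [liftExpand_of, liftExpand_of, liftExpand_of]
    rw [oreDiv_add_char (r := f m) (r' := f m') s s' ra sa ha]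
    simp [Submonoid.smul_def, map_smul]
  map_smul' x y := by
    induction x using OreLocalization.ind with | _ r s =>
    induction y using OreLocalization.ind with | _ m s' =>
    rcases oreDivSMulChar' r m s s' with ⟨r', s'', h, h'⟩
    rw [h']
    rw [liftExpand_of, liftExpand_of, RingHom.id_apply,
      oreDiv_smul_char r (f m) s s' r' s'' h]
    simp only [map_smul]

@[simp] theorem localMap_apply (f : M →ₗ[R] N) (m : M) (s : S) :
    localMap f (m /ₒ s) = f m /ₒ s := rfl

theorem localMap_injective {f : M →ₗ[R] N} (hf : Function.Injective f) :
    Function.Injective (localMap (S := S) f) := by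
  intro x y h
  induction x using OreLocalization.ind with | _ m s =>
  induction y using OreLocalization.ind with | _ m' s' =>
  rw [localMap_apply, localMap_apply, oreDiv_eq_iff] at h
  obtain ⟨u, v, h1, h2⟩ := h
  rw [oreDiv_eq_iff]
  refine ⟨u, v, hf ?_, h2⟩
  simp only [Submonoid.smul_def, ← map_smul] at h1 ⊢
  exact h1

theorem localMap_exact {f : M →ₗ[R] N} {g : N →ₗ[R] P}
    (hfg0 : ∀ m, g (f m) = 0) (hfg : ∀ n, g n = 0 → ∃ m, f m = n) :
    (∀ x, localMap (S := S) g (localMap (S := S) f x) = 0) ∧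
    (∀ y, localMap (S := S) g y = 0 → ∃ x, localMap (S := S) f x = y) := by
  constructor
  · intro x
    induction x using OreLocalization.ind with | _ m s =>
    rw [localMap_apply, localMap_apply, hfg0, zero_oreDiv]
  · intro y hy
    induction y using OreLocalization.ind with | _ n s =>
    rw [localMap_apply, oreDiv_eq_zero_iff] at hy
    obtain ⟨v, hv, hvn⟩ := hy
    rw [← map_smul] at hvn
    obtain ⟨m, hm⟩ := hfg _ hvn
    refine ⟨m /ₒ ⟨v * s, hv⟩, ?_⟩
    rw [localMap_apply, hm, ← OreLocalization.expand]

theorem orelocal_smul_eq_mul (x y : OreLocalization S R) : x • y = x * y := by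
  induction x using OreLocalization.ind with | _ r s =>
  induction y using OreLocalization.ind with | _ r' s' =>
  rw [oreDiv_smul_oreDiv, oreDiv_mul_oreDiv]; rfl

theorem subsingleton_oreLocalization [Subsingleton M] :
    Subsingleton (OreLocalization S M) := by
  constructor
  intro x y
  obtain ⟨m, s, rfl⟩ := exists_oreDiv x
  obtain ⟨m', s', rfl⟩ := exists_oreDiv y
  rw [Subsingleton.elim m 0, Subsingleton.elim m' 0, zero_oreDiv, zero_oreDiv]

end CentralLoc

section Noeth
variable {R : Type u} [Ring R] {S : Submonoid R} [OreLocalization.OreSet S]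

theorem comap_le_comap_iff {J₁ J₂ : Ideal (OreLocalization S R)} :
    J₁.comap (numeratorRingHom (S := S)) ≤ J₂.comap (numeratorRingHom (S := S)) ↔ J₁ ≤ J₂ := by
  constructor
  · intro h x hx
    induction x using OreLocalization.ind with | _ r s =>
    have h1 : numeratorRingHom (S := S) r ∈ J₁ := by
      have := J₁.smul_mem ((s : R) /ₒ (1 : S)) hx
      rw [smul_eq_mul, OreLocalization.mul_cancel] at this
      exact this
    have h2 : numeratorRingHom (S := S) r ∈ J₂ := h h1
    have h2' : (r /ₒ (1 : S)) ∈ J₂ := h2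
    have h3 := J₂.smul_mem ((1 : R) /ₒ s) h2'
    rw [smul_eq_mul, OreLocalization.one_div_mul, one_mul] at h3
    exact h3
  · intro h x hx
    exact h hx

theorem isNoetherianRing_oreLocalization [IsNoetherianRing R] :
    IsNoetherianRing (OreLocalization S R) := by
  let f : Ideal (OreLocalization S R) ↪o Ideal R :=
    OrderEmbedding.ofMapLEIff (fun J => J.comap (numeratorRingHom (S := S)))
      (fun J₁ J₂ => comap_le_comap_iff)
  rw [isNoetherianRing_iff, isNoetherian_iff]
  exact RelEmbedding.wellFounded (f.dual.ltEmbedding)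
    ((isNoetherian_iff (R := R) (M := R)).mp inferInstance)

end Noeth

section BaerAux
variable {R : Type u} [Ring R] {S : Submonoid R} [OreLocalization.OreSet S]
variable {M : Type u} [AddCommGroup M] [Module R M]

/-- T-scalar action of a numerator agrees with the R-action. -/
theorem numerator_oreDiv_smul (hc : ∀ s ∈ S, ∀ r : R, s * r = r * s) (r : R)
    (x : OreLocalization S M) :
    (r /ₒ (1 : S)) • x = r • x := by
  induction x using OreLocalization.ind with | _ m s =>
  rw [oreDiv_smul_char r m 1 s r s (hc s s.2 r), mul_one, central_smul_oreDiv hc]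

/-- smul by a central element, as a linear map -/
def centralSMulHom (w : R) (hw : ∀ r : R, w * r = r * w) : M →ₗ[R] M where
  toFun x := w • x
  map_add' := smul_add w
  map_smul' c x := by
    show w • (c • x) = c • (w • x)
    rw [smul_smul, smul_smul, hw c]

theorem central_list_prod_smul_eq_zero (l : List R) (t : R) (ht : t ∈ l)
    (hct : ∀ r : R, t * r = r * t) {x : M} (h : t • x = 0) :
    l.prod • x = 0 := by
  induction l with
  | nil => exact absurd ht List.not_mem_nil
  | cons a l ih =>
    rw [List.prod_cons]
    rcases List.mem_cons.mp ht with rfl | ht'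
    · rw [hct, mul_smul, h, smul_zero]
    · rw [mul_smul, ih ht', smul_zero]

theorem exists_common_denom (hc : ∀ s ∈ S, ∀ r : R, s * r = r * s)
    (l : List (OreLocalization S M)) :
    ∃ u : S, ∀ q ∈ l, ∃ y, q = y /ₒ u := by
  induction l with
  | nil => exact ⟨1, by simp⟩
  | cons q l ih =>
    obtain ⟨u, hu⟩ := ih
    obtain ⟨y, s, rfl⟩ := exists_oreDiv q
    have hsu : s * u = u * s := Subtype.ext (hc u u.2 s).symm
    refine ⟨u * s, ?_⟩
    intro q' hq'
    rcases List.mem_cons.mp hq' with rfl | hq''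
    · exact ⟨u • y, OreLocalization.expand' y s u⟩
    · obtain ⟨y', hy'⟩ := hu q' hq''
      refine ⟨s • y', ?_⟩
      rw [hy', OreLocalization.expand' y' u s, hsu]

end BaerAux

section BaerMain
variable {R : Type u} [Ring R] {S : Submonoid R} [OreLocalization.OreSet S]

theorem baer_oreLocalization (hc : ∀ s ∈ S, ∀ r : R, s * r = r * s) [IsNoetherianRing R]
    {I : Type u} [AddCommGroup I] [Module R I] (hI : Module.Injective R I) :
    Module.Baer (OreLocalization S R) (OreLocalization S I) := by
  intro J g
  classical
  set T := OreLocalization S R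
  set Q := OreLocalization S I
  set a : Ideal R := J.comap (numeratorRingHom (S := S)) with ha
  have hsmul_sub : ∀ (c : R) (x : T) (hx : x ∈ J),
      (⟨(c /ₒ (1:S)) * x, J.smul_mem _ hx⟩ : J) = c • (⟨x, hx⟩ : J) := by
    intro c x hx
    apply Subtype.ext
    show (c /ₒ (1:S)) * x = c • x
    rw [← smul_eq_mul]
    exact numerator_oreDiv_smul hc c x
  let φ : a →ₗ[R] Q :=
    { toFun := fun r => g ⟨r.1 /ₒ (1 : S), r.2⟩
      map_add' := by
        intro r r'
        show g ⟨(r.1 + r'.1) /ₒ (1 : S), _⟩ = g ⟨r.1 /ₒ (1:S), r.2⟩ + g ⟨r'.1 /ₒ (1:S), r'.2⟩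
        rw [← map_add]
        apply congrArg g
        apply Subtype.ext
        show (r.1 + r'.1) /ₒ (1:S) = r.1 /ₒ (1:S) + r'.1 /ₒ (1:S)
        rw [add_oreDiv]
      map_smul' := by
        intro c r
        show g ⟨(c • r).1 /ₒ (1 : S), _⟩ = c • g ⟨r.1 /ₒ (1:S), r.2⟩
        rw [← numerator_oreDiv_smul hc c (g ⟨r.1 /ₒ (1:S), r.2⟩), ← map_smul]
        apply congrArg g
        apply Subtype.ext
        show (c * r.1) /ₒ (1:S) = (c /ₒ (1:S)) • (r.1 /ₒ (1:S))
        rw [smul_div_one (p := c) (r := r.1) (s := (1:S)), smul_eq_mul] }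
  obtain ⟨k, v, hv⟩ := Submodule.fg_iff_exists_fin_generating_family.mp (IsNoetherian.noetherian a)
  have hv_mem : ∀ i, v i ∈ a := fun i => hv ▸ Submodule.subset_span ⟨i, rfl⟩
  let π : (Fin k → R) →ₗ[R] R :=
    { toFun := fun c => ∑ i, c i * v i
      map_add' := by intro c c'; simp [add_mul, Finset.sum_add_distrib]
      map_smul' := by intro t c; simp [Finset.mul_sum, mul_assoc] }
  have hπ_mem : ∀ c, π c ∈ a := by
    intro c
    show ∑ i, c i * v i ∈ a
    exact Submodule.sum_mem a fun i _ => by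
      simpa [smul_eq_mul] using a.smul_mem (c i) (hv_mem i)
  let π' : (Fin k → R) →ₗ[R] a := π.codRestrict a hπ_mem
  have hπ'_surj : Function.Surjective π' := by
    rintro ⟨r, hr⟩
    rw [← hv] at hr
    obtain ⟨c, hc'⟩ := (Submodule.mem_span_range_iff_exists_fun R).mp hr
    refine ⟨c, Subtype.ext ?_⟩
    show ∑ i, c i * v i = r
    simpa [smul_eq_mul] using hc'
  have hπ'_single : ∀ (i : Fin k) (t : R), π' (Pi.single i t) = t • ⟨v i, hv_mem i⟩ := by
    intro i t
    apply Subtype.ext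
    show ∑ j, (Pi.single i t : Fin k → R) j * v j = t • v i
    rw [Finset.sum_eq_single_of_mem i (Finset.mem_univ i)
      (fun j _ hj => by rw [Pi.single_eq_of_ne hj, zero_mul]), Pi.single_eq_same, smul_eq_mul]
  obtain ⟨u, hu⟩ := exists_common_denom hc (List.ofFn fun i => φ ⟨v i, hv_mem i⟩)
  have : ∀ i : Fin k, ∃ y : I, φ ⟨v i, hv_mem i⟩ = y /ₒ u := by
    intro i
    obtain ⟨y, hy⟩ := hu _ (by rw [List.mem_ofFn]; exact ⟨i, rfl⟩)
    exact ⟨y, hy⟩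
  choose y hy using this
  let ψ₀ : (Fin k → R) →ₗ[R] I :=
    { toFun := fun c => ∑ i, c i • y i
      map_add' := by intro c c'; simp [add_smul, Finset.sum_add_distrib]
      map_smul' := by intro t c; simp [Finset.smul_sum, smul_smul] }
  have hψ₀_single : ∀ (i : Fin k) (t : R), ψ₀ (Pi.single i t) = t • y i := by
    intro i t
    show ∑ j, (Pi.single i t : Fin k → R) j • y j = t • y i
    rw [Finset.sum_eq_single_of_mem i (Finset.mem_univ i)
      (fun j _ hj => by rw [Pi.single_eq_of_ne hj, zero_smul]), Pi.single_eq_same]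
  let mkU : I →ₗ[R] Q :=
    { toFun := fun x => x /ₒ u
      map_add' := by intro x x'; rw [add_oreDiv]
      map_smul' := by intro t x; rw [RingHom.id_apply, central_smul_oreDiv hc] }
  have key : φ.comp π' = mkU.comp ψ₀ := by
    apply LinearMap.pi_ext'
    intro i
    refine LinearMap.ext fun t => ?_
    show φ (π' (Pi.single i t)) = mkU (ψ₀ (Pi.single i t))
    rw [hπ'_single, hψ₀_single, map_smul, map_smul, hy]
    rfl
  have key' : ∀ c, φ (π' c) = (ψ₀ c) /ₒ u := fun c => LinearMap.congr_fun key c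
  obtain ⟨m, w, hw⟩ :=
    Submodule.fg_iff_exists_fin_generating_family.mp (IsNoetherian.noetherian (LinearMap.ker π'))
  have hwker : ∀ j, π' (w j) = 0 := fun j =>
    LinearMap.mem_ker.mp (hw ▸ Submodule.subset_span ⟨j, rfl⟩)
  have hψ₀w : ∀ j, ∃ (t : S), (t : R) • ψ₀ (w j) = 0 := by
    intro j
    have h0 : ψ₀ (w j) /ₒ u = 0 := by
      rw [← key' (w j), hwker, map_zero]
    obtain ⟨vv, hvv1, hvv2⟩ := oreDiv_eq_zero_iff.mp h0
    refine ⟨⟨u * vv, by rw [hc u u.2 vv]; exact hvv1⟩, ?_⟩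
    show (u * vv : R) • ψ₀ (w j) = 0
    rw [mul_smul, hvv2, smul_zero]
  choose tj htj using hψ₀w
  let wstar : S := (List.ofFn tj).prod
  have hwstar : ∀ j, (wstar : R) • ψ₀ (w j) = 0 := by
    intro j
    have hco : (wstar : R) = (List.ofFn fun j => (tj j : R)).prod := by
      simp only [wstar, SubmonoidClass.coe_list_prod, List.map_ofFn]
      rfl
    rw [hco]
    exact central_list_prod_smul_eq_zero _ (tj j : R)
      (by rw [List.mem_ofFn]; exact ⟨j, rfl⟩) (hc _ (tj j).2) (htj j)
  let χ : (Fin k → R) →ₗ[R] I := (centralSMulHom (wstar : R) (hc _ wstar.2)).comp ψ₀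
  have hKχ : LinearMap.ker π' ≤ LinearMap.ker χ := by
    rw [← hw, Submodule.span_le]
    rintro _ ⟨j, rfl⟩
    exact LinearMap.mem_ker.mpr (hwstar j)
  let e := π'.quotKerEquivOfSurjective hπ'_surj
  let ψ : a →ₗ[R] I := (Submodule.liftQ (LinearMap.ker π') χ hKχ).comp e.symm.toLinearMap
  have hψ : ∀ c, ψ (π' c) = χ c := by
    intro c
    have he : e (Submodule.Quotient.mk c) = π' c := by
      simp [e, LinearMap.quotKerEquivOfSurjective, LinearEquiv.trans_apply,
        LinearMap.quotKerEquivRange_apply_mk, LinearEquiv.ofTop_apply]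
    show (Submodule.liftQ (LinearMap.ker π') χ hKχ) (e.symm (π' c)) = χ c
    rw [← he, LinearEquiv.symm_apply_apply, Submodule.liftQ_apply]
  obtain ⟨Ψ, hΨ⟩ := Module.Baer.of_injective hI a ψ
  refine ⟨LinearMap.toSpanSingleton T Q (Ψ 1 /ₒ (wstar * u)), ?_⟩
  intro x hx
  obtain ⟨r, s, rfl⟩ := exists_oreDiv x
  have hρr : (r /ₒ (1 : S)) ∈ J := by
    have := J.smul_mem ((s : R) /ₒ (1 : S)) hx
    rw [smul_eq_mul, OreLocalization.mul_cancel] at this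
    exact this
  have hra : r ∈ a := hρr
  apply MulAction.injective (β := Q) (numeratorUnit (S := S) s)
  beta_reduce
  rw [Units.smul_def, Units.smul_def]
  have hval : ((numeratorUnit (S := S) s : Units T) : T) = (s : R) /ₒ (1 : S) := rfl
  rw [hval]
  have lhs1 : ((s : R) /ₒ (1 : S)) • (LinearMap.toSpanSingleton T Q (Ψ 1 /ₒ (wstar * u))) (r /ₒ s)
      = (LinearMap.toSpanSingleton T Q (Ψ 1 /ₒ (wstar * u))) (((s : R) /ₒ (1 : S)) * (r /ₒ s)) := by
    rw [← map_smul, smul_eq_mul]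
  rw [lhs1, OreLocalization.mul_cancel, LinearMap.toSpanSingleton_apply]
  obtain ⟨c, hc'⟩ := hπ'_surj ⟨r, hra⟩
  have lhs2 : (r /ₒ (1 : S)) • (Ψ 1 /ₒ (wstar * u)) = g ⟨r /ₒ (1 : S), hρr⟩ := by
    rw [numerator_oreDiv_smul hc, central_smul_oreDiv hc]
    have hΨr : r • Ψ 1 = ψ ⟨r, hra⟩ := by
      rw [← map_smul, smul_eq_mul, mul_one, hΨ r hra]
    rw [hΨr, ← hc', hψ]
    show (wstar : R) • ψ₀ c /ₒ (wstar * u) = g ⟨r /ₒ (1:S), hρr⟩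
    rw [← Submonoid.smul_def, ← OreLocalization.expand', ← key' c, hc']
    rfl
  rw [lhs2, ← map_smul]
  apply congrArg g
  apply Subtype.ext
  show r /ₒ (1:S) = ((s : R) /ₒ (1:S)) • (r /ₒ s)
  rw [smul_eq_mul, OreLocalization.mul_cancel]

end BaerMain

/-! ### Abstract finite injective resolution data -/

/-- Concrete data of a finite injective resolution of the ring as a module over itself. -/
def FIRData (A : Type u) [Ring A] : Prop :=
  ∃ (n : ℕ) (M : ℕ → ModuleCat.{u} A) (d : ∀ i, M i ⟶ M (i + 1))
    (ι : ModuleCat.of A A ⟶ M 0),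
    (∀ i, Module.Injective A (M i)) ∧
    Function.Injective ι ∧
    (∀ a : A, d 0 (ι a) = 0) ∧
    (∀ x : M 0, d 0 x = 0 → ∃ a : A, ι a = x) ∧
    (∀ i (y : M i), d (i + 1) (d i y) = 0) ∧
    (∀ i (x : M (i + 1)), d (i + 1) x = 0 → ∃ y : M i, d i y = x) ∧
    (∀ m, n < m → Subsingleton (M m))

theorem subsingleton_of_isZero {A : Type u} [Ring A] {X : ModuleCat.{u} A}
    (h : Limits.IsZero X) : Subsingleton X := by
  constructor
  intro x y
  have hid : 𝟙 X = 0 := h.eq_of_src _ _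
  have key : ∀ z : X, z = 0 := by
    intro z
    have := ConcreteCategory.congr_hom hid z
    simpa using this
  rw [key x, key y]

theorem firData_of_hasFIR (A : Type u) [Ring A] (h : HasFiniteInjectiveResolution A A) :
    FIRData A := by
  obtain ⟨I, n, hn⟩ := h
  set e := HomologicalComplex.singleObjXSelf (ComplexShape.up ℕ) 0 (ModuleCat.of A A) with he
  refine ⟨n, fun i => I.cocomplex.X i, fun i => I.cocomplex.d i (i + 1),
    e.inv ≫ I.ι.f 0, ?_, ?_, ?_, ?_, ?_, ?_, ?_⟩
  · intro i
    have hi : Injective (ModuleCat.of A ↑(I.cocomplex.X i)) := by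
      rw [ModuleCat.of_coe]; exact I.injective i
    exact Module.injective_module_of_injective_object _ _
  · rw [← ModuleCat.mono_iff_injective]
    infer_instance
  · intro a
    have h0 : (e.inv ≫ I.ι.f 0) ≫ I.cocomplex.d 0 1 = 0 := by
      rw [Category.assoc, I.ι_f_zero_comp_complex_d, Limits.comp_zero]
    have := ConcreteCategory.congr_hom h0 a
    rw [comp_apply] at this
    simpa using this
  · intro x hx
    have hex := I.exact₀
    rw [ShortComplex.moduleCat_exact_iff] at hex
    obtain ⟨z, hz⟩ := hex x hx
    refine ⟨e.hom z, ?_⟩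
    have h3 : e.inv (e.hom z) = z := by
      have h2 := ConcreteCategory.congr_hom e.hom_inv_id z
      rw [comp_apply, id_apply] at h2
      exact h2
    show (I.ι.f 0) (e.inv (e.hom z)) = x
    rw [h3]
    exact hz
  · intro i y
    have := ConcreteCategory.congr_hom (I.cocomplex.d_comp_d i (i + 1) (i + 2)) y
    rw [comp_apply] at this
    simpa using this
  · intro i x hx
    have hex := I.exact_succ i
    rw [ShortComplex.moduleCat_exact_iff] at hex
    exact hex x hx
  · intro m hm
    exact subsingleton_of_isZero (hn m hm)

theorem hasFIR_of_firData (A : Type u) [Ring A] (h : FIRData A) :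
    HasFiniteInjectiveResolution A A := by
  obtain ⟨n, M, d, ι, hinj, hι, hcomp0, hexact0, hdd, hexact, hbound⟩ := h
  have hddc : ∀ i, d i ≫ d (i + 1) = 0 := by
    intro i
    ext y
    exact hdd i y
  set K : CochainComplex (ModuleCat.{u} A) ℕ := CochainComplex.of M d hddc with hK
  have hKd : ∀ i, K.d i (i + 1) = d i := fun i => CochainComplex.of_d M d i
  have hcomp0c : ι ≫ K.d 0 1 = 0 := by
    rw [hKd 0]
    refine ModuleCat.hom_ext (LinearMap.ext fun a => ?_)
    exact hcomp0 a
  have hKinj : ∀ i, Injective (K.X i) := by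
    intro i
    have hi : Injective (ModuleCat.of A ↑(M i)) := by
      have := hinj i
      exact Module.injective_object_of_injective_module A (M i)
    show Injective (M i)
    rwa [ModuleCat.of_coe] at hi
  have hKexact : ∀ i : ℕ, K.ExactAt (i + 1) := by
    intro i
    rw [HomologicalComplex.exactAt_iff' _ i (i + 1) (i + 1 + 1) (by simp) (by simp)]
    rw [ShortComplex.moduleCat_exact_iff]
    intro x hx
    dsimp [HomologicalComplex.sc', HomologicalComplex.shortComplexFunctor'] at x hx ⊢
    rw [hKd (i+1)] at hx
    obtain ⟨y, hy⟩ := hexact i x hx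
    refine ⟨y, ?_⟩
    rw [hKd i]
    exact hy
  refine ⟨{ cocomplex := K
            injective := hKinj
            ι := (CochainComplex.fromSingle₀Equiv K (ModuleCat.of A A)).symm ⟨ι, hcomp0c⟩
            quasiIso := ⟨fun m => ?_⟩ }, n, ?_⟩
  · cases m with
    | zero =>
      rw [CochainComplex.quasiIsoAt₀_iff, ShortComplex.quasiIso_iff_of_zeros]
      · refine (ShortComplex.exact_and_mono_f_iff_of_iso
          (ShortComplex.isoMk (S₁ := ShortComplex.mk ι (K.d 0 1) hcomp0c)
            (Iso.refl _) (Iso.refl _) (Iso.refl _) (by simp) (by simp))).2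
          ⟨?_, ?_⟩
        · rw [ShortComplex.moduleCat_exact_iff]
          intro x hx
          exact hexact0 x (by rw [← hKd 0]; exact hx)
        · exact (ModuleCat.mono_iff_injective ι).mpr hι
      all_goals rfl
    | succ m =>
      rw [quasiIsoAt_iff_exactAt]
      · exact hKexact m
      · apply CochainComplex.exactAt_succ_single_obj
  · intro m hm
    show Limits.IsZero (K.X m)
    have : Subsingleton (K.X m) := by
      show Subsingleton (M m)
      exact hbound m hm
    exact ModuleCat.isZero_of_subsingleton _

/-! ### Transfer along ring equivalences -/

theorem moduleInjective_of_equiv {A B : Type u} [Ring A] [Ring B] (e : B ≃+* A)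
    {Q : Type u} [AddCommGroup Q] [Module A Q] [Module B Q]
    (hsmul : ∀ (b : B) (q : Q), b • q = e b • q)
    (h : Module.Injective A Q) : Module.Injective B Q := by
  constructor
  intro X Y _ _ _ _ f hf g
  letI mX : Module A X := Module.compHom X (e.symm : A →+* B)
  letI mY : Module A Y := Module.compHom Y (e.symm : A →+* B)
  have hmX : ∀ (a : A) (x : X), a • x = e.symm a • x := fun _ _ => rfl
  have hmY : ∀ (a : A) (y : Y), a • y = e.symm a • y := fun _ _ => rfl
  let f' : X →ₗ[A] Y :=
    { toFun := f
      map_add' := f.map_add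
      map_smul' := fun a x => by
        rw [RingHom.id_apply, hmX, hmY]
        exact f.map_smul _ x }
  let g' : X →ₗ[A] Q :=
    { toFun := g
      map_add' := g.map_add
      map_smul' := fun a x => by
        rw [RingHom.id_apply, hmX]
        show g (e.symm a • x) = a • g x
        rw [map_smul, hsmul, RingEquiv.apply_symm_apply] }
  obtain ⟨h', hh'⟩ := h.out f' hf g'
  refine ⟨{ toFun := h'
            map_add' := h'.map_add
            map_smul' := fun b y => ?_ }, hh'⟩
  rw [RingHom.id_apply, hsmul]
  have := h'.map_smul (e b) y
  rw [hmY, RingEquiv.symm_apply_apply] at this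
  exact this

theorem firData_of_ringEquiv {A B : Type u} [Ring A] [Ring B] (e : B ≃+* A)
    (h : FIRData A) : FIRData B := by
  obtain ⟨n, M, d, ι, hinj, hι, hcomp0, hexact0, hdd, hexact, hbound⟩ := h
  letI mod : ∀ i, Module B (M i) := fun i => Module.compHom (M i) (e : B →+* A)
  have hsm : ∀ (i : ℕ) (b : B) (q : M i), b • q = e b • q := fun _ _ _ => rfl
  let M' : ℕ → ModuleCat.{u} B := fun i => ModuleCat.of B (M i)
  let d' : ∀ i, M' i ⟶ M' (i + 1) := fun i => ModuleCat.ofHom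
    { toFun := d i
      map_add' := (d i).hom.map_add
      map_smul' := fun b x => by
        rw [RingHom.id_apply, hsm, hsm]
        exact (d i).hom.map_smul (e b) x }
  let ι' : ModuleCat.of B B ⟶ M' 0 := ModuleCat.ofHom
    { toFun := fun b => ι (e b)
      map_add' := fun b b' => by
        show ι (e (b + b')) = ι (e b) + ι (e b')
        rw [map_add, map_add]
      map_smul' := fun b b' => by
        rw [RingHom.id_apply, smul_eq_mul]
        show ι (e (b * (show B from b'))) = b • ι (e (show B from b'))
        rw [map_mul, ← smul_eq_mul, map_smul, ← hsm] }
  refine ⟨n, M', d', ι', ?_, ?_, ?_, ?_, hdd, hexact, hbound⟩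
  · intro i
    exact moduleInjective_of_equiv (Q := (M i : Type u)) e (hsm i) (hinj i)
  · intro b b' hbb
    exact e.injective (hι hbb)
  · intro b
    exact hcomp0 (e b)
  · intro x hx
    obtain ⟨a, ha⟩ := hexact0 x hx
    exact ⟨e.symm a, by show ι (e (e.symm a)) = x; rw [RingEquiv.apply_symm_apply]; exact ha⟩

/-! ### Localizing the resolution data -/

theorem firData_oreLocalization {R : Type u} [Ring R] {S : Submonoid R}
    [OreLocalization.OreSet S] (hc : ∀ s ∈ S, ∀ r : R, s * r = r * s) [IsNoetherianRing R]
    (h : FIRData R) : FIRData (OreLocalization S R) := by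
  obtain ⟨n, M, d, ι, hinj, hι, hcomp0, hexact0, hdd, hexact, hbound⟩ := h
  set T := OreLocalization S R
  let M' : ℕ → ModuleCat.{u} T := fun i => ModuleCat.of T (OreLocalization S (M i))
  let d' : ∀ i, M' i ⟶ M' (i + 1) := fun i => ModuleCat.ofHom (localMap (d i).hom)
  let ι' : ModuleCat.of T T ⟶ M' 0 := ModuleCat.ofHom
    { toFun := fun x => localMap (S := S) ι.hom x
      map_add' := fun x y => map_add _ x y
      map_smul' := fun c x => by
        rw [RingHom.id_apply, smul_eq_mul, ← orelocal_smul_eq_mul]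
        exact map_smul (localMap (S := S) ι.hom) c x }
  refine ⟨n, M', d', ι', ?_, ?_, ?_, ?_, ?_, ?_, ?_⟩
  · intro i
    exact Module.Baer.injective (baer_oreLocalization hc (hinj i))
  · intro x y hxy
    exact localMap_injective hι hxy
  · intro a
    exact (localMap_exact hcomp0 hexact0).1 a
  · intro x hx
    exact (localMap_exact hcomp0 hexact0).2 x hx
  · intro i y
    exact (localMap_exact (hdd i) (hexact i)).1 y
  · intro i x hx
    exact (localMap_exact (hdd i) (hexact i)).2 x hx
  · intro m hm
    have := hbound m hm
    exact subsingleton_oreLocalization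

/-! ### Opposites -/

/-- A central submonoid is an Ore set. -/
def oreSetOfCentral {R : Type u} [Monoid R] (S : Submonoid R)
    (hc : ∀ s ∈ S, ∀ r : R, s * r = r * s) : OreLocalization.OreSet S where
  ore_right_cancel r₁ r₂ s h := ⟨s, by rw [hc s s.2 r₁, hc s s.2 r₂, h]⟩
  oreNum r _ := r
  oreDenom _ s := s
  ore_eq r s := hc s s.2 r

section OpIso
variable {R : Type u} [Ring R] (S : Submonoid R) [OreLocalization.OreSet S]
  [OreLocalization.OreSet (Submonoid.op S)]

/-- a unit of `A`, as a unit of `Aᵐᵒᵖ` -/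
def unitsOp {A : Type u} [Monoid A] (u : Units A) : Units Aᵐᵒᵖ where
  val := op u.val
  inv := op u.inv
  val_inv := by rw [← op_mul, u.inv_val, op_one]
  inv_val := by rw [← op_mul, u.val_inv, op_one]

/-- the canonical map S →* Tˣ -/
def numeratorUnits : S →* (OreLocalization S R)ˣ where
  toFun s := numeratorUnit s
  map_one' := by
    apply Units.ext
    show ((1 : S) : R) /ₒ (1 : S) = 1
    rw [OneMemClass.coe_one, ← OreLocalization.one_def]
  map_mul' s t := by
    apply Units.ext
    show ((s * t : S) : R) /ₒ (1 : S) = (((s : R)) /ₒ (1 : S)) * (((t : R)) /ₒ (1 : S))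
    rw [OreLocalization.mul_div_one]
    rfl

noncomputable def opHom : OreLocalization (Submonoid.op S) Rᵐᵒᵖ →+* (OreLocalization S R)ᵐᵒᵖ :=
  universalHom
    (RingHom.op (numeratorRingHom (S := S)))
    { toFun := fun s => unitsOp (numeratorUnit (⟨(s : Rᵐᵒᵖ).unop, s.2⟩ : S))
      map_one' := by
        apply Units.ext
        show op ((((1 : Submonoid.op S) : Rᵐᵒᵖ).unop) /ₒ (1 : S)) = 1
        show op ((1 : R) /ₒ (1 : S)) = 1
        rw [← OreLocalization.one_def, op_one]
      map_mul' := by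
        intro s t
        apply Units.ext
        show op ((((s * t : Submonoid.op S) : Rᵐᵒᵖ).unop) /ₒ (1 : S)) =
          op (((s : Rᵐᵒᵖ).unop) /ₒ (1 : S)) * op (((t : Rᵐᵒᵖ).unop) /ₒ (1 : S))
        rw [← op_mul, OreLocalization.mul_div_one]
        rfl }
    (fun s => rfl)

noncomputable def opHomInvAux :
    OreLocalization S R →+* (OreLocalization (Submonoid.op S) Rᵐᵒᵖ)ᵐᵒᵖ :=
  universalHom
    ((RingHom.op (numeratorRingHom (S := Submonoid.op S))).comp (RingEquiv.opOp R).toRingHom)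
    { toFun := fun s => unitsOp (numeratorUnit (⟨op (s : R), s.2⟩ : Submonoid.op S))
      map_one' := by
        apply Units.ext
        show op ((op ((1 : S) : R)) /ₒ (1 : Submonoid.op S)) = 1
        show op ((1 : Rᵐᵒᵖ) /ₒ (1 : Submonoid.op S)) = 1
        rw [← OreLocalization.one_def, op_one]
      map_mul' := by
        intro s t
        apply Units.ext
        show op ((op ((s * t : S) : R)) /ₒ (1 : Submonoid.op S)) =
          op ((op ((s : S) : R)) /ₒ (1 : Submonoid.op S)) *
          op ((op ((t : S) : R)) /ₒ (1 : Submonoid.op S))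
        rw [← op_mul, OreLocalization.mul_div_one]
        rfl }
    (fun s => rfl)

noncomputable def opRingIso :
    OreLocalization (Submonoid.op S) Rᵐᵒᵖ ≃+* (OreLocalization S R)ᵐᵒᵖ := by
  refine RingEquiv.ofRingHom (opHom S)
    (((RingEquiv.opOp (OreLocalization (Submonoid.op S) Rᵐᵒᵖ)).symm.toRingHom).comp
      (RingHom.op (opHomInvAux S))) ?_ ?_
  swap
  · have h1 : ∀ a : Rᵐᵒᵖ, (opHom S) (numeratorHom a) = op (numeratorHom (S := S) a.unop) :=
      fun a => universalHom_commutes _ _ _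
    have h2 : ∀ r : R, (opHomInvAux S) (numeratorHom r) =
        op (numeratorHom (S := Submonoid.op S) (op r)) :=
      fun r => universalHom_commutes _ _ _
    have key : ∀ a : Rᵐᵒᵖ,
        ((((RingEquiv.opOp (OreLocalization (Submonoid.op S) Rᵐᵒᵖ)).symm.toRingHom).comp
          (RingHom.op (opHomInvAux S))).comp (opHom S)) (numeratorHom a) =
        numeratorRingHom a := by
      intro a
      show (RingEquiv.opOp _).symm ((RingHom.op (opHomInvAux S)) ((opHom S) (numeratorHom a)))
        = numeratorHom a
      rw [h1]
      show (RingEquiv.opOp _).symm (op ((opHomInvAux S) (numeratorHom a.unop))) = numeratorHom a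
      rw [h2]
      rfl
    exact (universalHom_unique (numeratorRingHom (S := Submonoid.op S)) (numeratorUnits _)
        (fun s => rfl) _ key).trans
      (universalHom_unique (numeratorRingHom (S := Submonoid.op S)) (numeratorUnits _)
        (fun s => rfl) (RingHom.id _) (fun r => rfl)).symm
  · have h1 : ∀ a : Rᵐᵒᵖ, (opHom S) (numeratorHom a) = op (numeratorHom (S := S) a.unop) :=
      fun a => universalHom_commutes _ _ _
    have h2 : ∀ r : R, (opHomInvAux S) (numeratorHom r) =
        op (numeratorHom (S := Submonoid.op S) (op r)) :=
      fun r => universalHom_commutes _ _ _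
    have keyT : ((RingEquiv.opOp (OreLocalization S R)).symm.toRingHom.comp
        ((RingHom.op (opHom S)).comp (opHomInvAux S))) = RingHom.id _ := by
      refine ((universalHom_unique (numeratorRingHom (S := S)) (numeratorUnits _)
          (fun s => rfl) _ ?_).trans
        (universalHom_unique (numeratorRingHom (S := S)) (numeratorUnits _)
          (fun s => rfl) (RingHom.id _) (fun r => rfl)).symm)
      intro r
      show (RingEquiv.opOp _).symm ((RingHom.op (opHom S)) ((opHomInvAux S) (numeratorHom r)))
        = numeratorRingHom r
      rw [h2]
      show (RingEquiv.opOp _).symm (op ((opHom S) (numeratorHom (S := Submonoid.op S) (op r))))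
        = numeratorHom r
      rw [h1]
      rfl
    apply RingHom.ext
    intro x
    show (opHom S) ((RingEquiv.opOp _).symm ((RingHom.op (opHomInvAux S)) x)) = x
    have hx : x = op x.unop := rfl
    rw [hx]
    show (opHom S) ((RingEquiv.opOp _).symm (op ((opHomInvAux S) (x.unop)))) = op x.unop
    apply unop_injective
    have := RingHom.congr_fun keyT x.unop
    simpa using this

end OpIso

end StmtAux

open StmtAux OreLocalization MulOpposite in
theorem stmt_1 (R : Type u) [Ring R] (S : Submonoid R)
    (hcentral : ∀ s ∈ S, ∀ r : R, s * r = r * s)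
    [OreLocalization.OreSet S]
    (noeth_left : IsNoetherianRing R) (noeth_right : IsNoetherianRing Rᵐᵒᵖ)
    (inj_left : HasFiniteInjectiveResolution R R)
    (inj_right : HasFiniteInjectiveResolution Rᵐᵒᵖ Rᵐᵒᵖ) :
    IsNoetherianRing (OreLocalization S R) ∧
    IsNoetherianRing (OreLocalization S R)ᵐᵒᵖ ∧
    HasFiniteInjectiveResolution (OreLocalization S R) (OreLocalization S R) ∧
    HasFiniteInjectiveResolution (OreLocalization S R)ᵐᵒᵖ (OreLocalization S R)ᵐᵒᵖ := by
  have hc_op : ∀ s ∈ Submonoid.op S, ∀ r : Rᵐᵒᵖ, s * r = r * s := by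
    intro s hs r
    apply unop_injective
    show r.unop * s.unop = s.unop * r.unop
    exact (hcentral s.unop hs r.unop).symm
  letI : OreLocalization.OreSet (Submonoid.op S) := oreSetOfCentral _ hc_op
  have e := opRingIso S
  refine ⟨?_, ?_, ?_, ?_⟩
  · exact isNoetherianRing_oreLocalization
  · have h1 : IsNoetherianRing (OreLocalization (Submonoid.op S) Rᵐᵒᵖ) :=
      isNoetherianRing_oreLocalization
    exact isNoetherianRing_of_surjective _ _ e.toRingHom e.surjective
  · exact hasFIR_of_firData _
      (firData_oreLocalization hcentral (firData_of_hasFIR _ inj_left))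
  · refine hasFIR_of_firData _ ?_
    refine firData_of_ringEquiv e.symm ?_
    exact firData_oreLocalization hc_op (firData_of_hasFIR _ inj_right)
end

section
/- Every nonzero indecomposable left R-module is isomorphic to one of χ₁, χ₂, Re₁, or Re₂, where Reᵢ denotes the left ideal of R generated by eᵢ. -/
universe u

open FreeAlgebra

/-- The defining relations of the algebra `R`: generator `0` is `e₁`, generator `1`
is `e₂`, generator `2` is `T`, subject to `e₁ + e₂ = 1`, `eᵢ² = eᵢ`, `e₁e₂ = e₂e₁ = 0`,
`e₁T = Te₂`, `e₂T = Te₁`, `T² = 0`. -/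
inductive RRel (k : Type u) [Field k] :
    FreeAlgebra k (Fin 3) → FreeAlgebra k (Fin 3) → Prop
  | unit : RRel k (ι k 0 + ι k 1) 1
  | idem₁ : RRel k (ι k 0 * ι k 0) (ι k 0)
  | idem₂ : RRel k (ι k 1 * ι k 1) (ι k 1)
  | orth₁₂ : RRel k (ι k 0 * ι k 1) 0
  | orth₂₁ : RRel k (ι k 1 * ι k 0) 0
  | comm₁ : RRel k (ι k 0 * ι k 2) (ι k 2 * ι k 1)
  | comm₂ : RRel k (ι k 1 * ι k 2) (ι k 2 * ι k 0)
  | sq : RRel k (ι k 2 * ι k 2) 0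

/-- The `k`-algebra `R` on generators `e₁, e₂, T` with the relations above. -/
abbrev RAlg (k : Type u) [Field k] : Type u := RingQuot (RRel k)

variable (k : Type u) [Field k]

/-- The idempotent `e₁ ∈ R`. -/
noncomputable def eR (i : Fin 2) : RAlg k := RingQuot.mkAlgHom k (RRel k) (ι k i.castSucc)

/-- The element `T ∈ R`. -/
noncomputable def TR : RAlg k := RingQuot.mkAlgHom k (RRel k) (ι k 2)

/-- The character `χᵢ : R → k` (for `i : Fin 2`; `i = 0` corresponds to `χ₁` and
`i = 1` to `χ₂`), sending `T` to `0`, `eᵢ₊₁` to `1` and the other idempotent to `0`. -/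
noncomputable def chiHom (i : Fin 2) : RAlg k →ₐ[k] k :=
  RingQuot.liftAlgHom k
    ⟨FreeAlgebra.lift k (fun j : Fin 3 => if (j : ℕ) = (i : ℕ) then (1 : k) else 0), by
      intro x y h
      induction h <;> fin_cases i <;>
        simp [FreeAlgebra.lift_ι_apply]⟩

/-- The 1-dimensional `R`-module `χᵢ` (a type synonym for `k`). -/
def ChiMod (k : Type u) [Field k] (_i : Fin 2) : Type u := k

noncomputable instance (i : Fin 2) : AddCommGroup (ChiMod k i) :=
  inferInstanceAs (AddCommGroup k)

noncomputable instance (i : Fin 2) : Module (RAlg k) (ChiMod k i) :=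
  Module.compHom k (chiHom k i).toRingHom

/-- The left ideal `Reᵢ`, i.e. the `R`-submodule of `R` generated by `eᵢ`. -/
noncomputable def ReMod (i : Fin 2) : Submodule (RAlg k) (RAlg k) :=
  Submodule.span (RAlg k) {eR k i}


section Facts
variable {k}

lemma eR_def (i : Fin 2) : eR k i = RingQuot.mkAlgHom k (RRel k) (ι k i.castSucc) := rfl

lemma e_add_e : eR k 0 + eR k 1 = 1 := by
  have h := RingQuot.mkAlgHom_rel k (RRel.unit (k := k))
  simpa [eR, map_add] using h

lemma e_mul_e (i : Fin 2) : eR k i * eR k i = eR k i := by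
  fin_cases i
  · have h := RingQuot.mkAlgHom_rel k (RRel.idem₁ (k := k))
    simpa [eR, map_mul] using h
  · have h := RingQuot.mkAlgHom_rel k (RRel.idem₂ (k := k))
    simpa [eR, map_mul] using h

lemma e_mul_other (i : Fin 2) : eR k i * eR k (i + 1) = 0 := by
  fin_cases i
  · have h := RingQuot.mkAlgHom_rel k (RRel.orth₁₂ (k := k))
    simpa [eR, map_mul] using h
  · have h := RingQuot.mkAlgHom_rel k (RRel.orth₂₁ (k := k))
    simpa [eR, map_mul] using h

lemma e_mul_t (i : Fin 2) : eR k i * TR k = TR k * eR k (i + 1) := by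
  fin_cases i
  · have h := RingQuot.mkAlgHom_rel k (RRel.comm₁ (k := k))
    simpa [eR, TR, map_mul] using h
  · have h := RingQuot.mkAlgHom_rel k (RRel.comm₂ (k := k))
    simpa [eR, TR, map_mul] using h

lemma t_mul_e (i : Fin 2) : TR k * eR k i = eR k (i + 1) * TR k := by
  have h := e_mul_t (k := k) (i + 1)
  fin_cases i <;> simpa using h.symm

lemma t_mul_t : TR k * TR k = (0 : RAlg k) := by
  have h := RingQuot.mkAlgHom_rel k (RRel.sq (k := k))
  simpa [TR, map_mul] using h

lemma ralg_induction {P : RAlg k → Prop} (h0 : P (eR k 0)) (h1 : P (eR k 1)) (h2 : P (TR k))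
    (halg : ∀ c : k, P (algebraMap k (RAlg k) c))
    (hadd : ∀ x y, P x → P y → P (x + y))
    (hmul : ∀ x y, P x → P y → P (x * y)) : ∀ r, P r := by
  intro r
  obtain ⟨x, rfl⟩ := RingQuot.mkAlgHom_surjective k (RRel k) r
  induction x using FreeAlgebra.induction with
  | grade0 c => simpa using halg c
  | grade1 j =>
      fin_cases j
      · exact h0
      · exact h1
      · exact h2
  | mul a b ha hb => rw [map_mul]; exact hmul _ _ ha hb
  | add a b ha hb => rw [map_add]; exact hadd _ _ ha hb

lemma chi_e (i i' : Fin 2) : chiHom k i (eR k i') = if (i' : ℕ) = (i : ℕ) then 1 else 0 := by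
  simp [chiHom, eR, RingQuot.liftAlgHom_mkAlgHom_apply]

lemma chi_t (i : Fin 2) : chiHom k i (TR k) = 0 := by
  have h2 : ¬(2 = (i : ℕ)) := by have := i.isLt; omega
  simp [chiHom, TR, RingQuot.liftAlgHom_mkAlgHom_apply, h2]

end Facts
section Span
variable {k}

lemma e_mul_e' (i j : Fin 2) : eR k i * eR k j = if i = j then eR k i else 0 := by
  fin_cases i <;> fin_cases j
  · simpa using e_mul_e (k := k) 0
  · simpa using e_mul_other (k := k) 0
  · simpa using e_mul_other (k := k) 1
  · simpa using e_mul_e (k := k) 1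

lemma ReMod_span {i : Fin 2} {y : RAlg k} (hy : y ∈ ReMod k i) :
    ∃ a c : k, y = a • eR k i + c • (TR k * eR k i) := by
  rw [ReMod, Submodule.mem_span_singleton] at hy
  obtain ⟨r, rfl⟩ := hy
  rw [smul_eq_mul]
  have key : ∀ r : RAlg k,
      (∃ a c : k, r * eR k i = a • eR k i + c • (TR k * eR k i)) ∧
      (∃ a c : k, r * (TR k * eR k i) = a • eR k i + c • (TR k * eR k i)) := by
    intro r
    induction r using ralg_induction with
    | h0 =>
        constructor
        · refine ⟨if (0 : Fin 2) = i then 1 else 0, 0, ?_⟩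
          rw [e_mul_e']
          by_cases h : (0 : Fin 2) = i <;> simp [h]
        · refine ⟨0, if (1 : Fin 2) = i then 1 else 0, ?_⟩
          rw [← mul_assoc, e_mul_t, mul_assoc, e_mul_e']
          by_cases h : (1 : Fin 2) = i <;> simp [h]
    | h1 =>
        constructor
        · refine ⟨if (1 : Fin 2) = i then 1 else 0, 0, ?_⟩
          rw [e_mul_e']
          by_cases h : (1 : Fin 2) = i <;> simp [h]
        · refine ⟨0, if (0 : Fin 2) = i then 1 else 0, ?_⟩
          rw [← mul_assoc, e_mul_t, mul_assoc, e_mul_e']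
          have h2 : (1 : Fin 2) + 1 = 0 := rfl
          rw [h2]
          by_cases h : (0 : Fin 2) = i <;> simp [h]
    | h2 =>
        constructor
        · exact ⟨0, 1, by simp⟩
        · exact ⟨0, 0, by rw [← mul_assoc, t_mul_t]; simp⟩
    | halg c =>
        constructor
        · exact ⟨c, 0, by simp [Algebra.smul_def]⟩
        · exact ⟨0, c, by simp [Algebra.smul_def]⟩
    | hadd x y hx hy =>
        obtain ⟨⟨a, c, h1⟩, ⟨a', c', h1'⟩⟩ := hx
        obtain ⟨⟨b, d, h2⟩, ⟨b', d', h2'⟩⟩ := hy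
        constructor
        · exact ⟨a + b, c + d, by rw [add_mul, h1, h2]; module⟩
        · exact ⟨a' + b', c' + d', by rw [add_mul, h1', h2']; module⟩
    | hmul x y hx hy =>
        obtain ⟨⟨ax, cx, hx1⟩, ⟨ax', cx', hx2⟩⟩ := hx
        obtain ⟨⟨ay, cy, hy1⟩, ⟨ay', cy', hy2⟩⟩ := hy
        constructor
        · refine ⟨ay * ax + cy * ax', ay * cx + cy * cx', ?_⟩
          rw [mul_assoc, hy1, mul_add, mul_smul_comm, mul_smul_comm, hx1, hx2]
          module
        · refine ⟨ay' * ax + cy' * ax', ay' * cx + cy' * cx', ?_⟩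
          rw [mul_assoc, hy2, mul_add, mul_smul_comm, mul_smul_comm, hx1, hx2]
          module
  obtain ⟨a, c, h⟩ := (key r).1
  exact ⟨a, c, h⟩

end Span
section CaseA
variable {k} {M : Type u} [AddCommGroup M] [Module (RAlg k) M]

def ChiMod.toK {i : Fin 2} (c : ChiMod k i) : k := c

lemma smul_algebraMap_comm (r : RAlg k) (c : k) (m : M) :
    r • ((algebraMap k (RAlg k) c) • m) = algebraMap k (RAlg k) c • (r • m) := by
  rw [← mul_smul, ← mul_smul, Algebra.commutes]

lemma caseA (i : Fin 2) (hT : ∀ m : M, TR k • m = 0) (hE : ∀ m : M, eR k i • m = m)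
    (hne : Nontrivial M)
    (hind : ∀ N P : Submodule (RAlg k) M, IsCompl N P → N = ⊥ ∨ P = ⊥) :
    Nonempty (M ≃ₗ[RAlg k] ChiMod k i) := by
  letI : Module k M := Module.compHom M (algebraMap k (RAlg k))
  have hsmul : ∀ (c : k) (m : M), c • m = algebraMap k (RAlg k) c • m := fun _ _ => rfl
  have hgen : ∀ (j : Fin 2) (m : M),
      eR k j • m = algebraMap k (RAlg k) (chiHom k i (eR k j)) • m := by
    intro j m
    by_cases h : j = i
    · subst h
      rw [chi_e, if_pos rfl, map_one, one_smul, hE]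
    · have hji : (j : ℕ) ≠ (i : ℕ) := fun hc => h (Fin.ext hc)
      rw [chi_e, if_neg hji, map_zero, zero_smul]
      conv_lhs => rw [← hE m, ← mul_smul, e_mul_e', if_neg h, zero_smul]
  have key : ∀ (r : RAlg k) (m : M), r • m = algebraMap k (RAlg k) (chiHom k i r) • m := by
    intro r
    induction r using ralg_induction with
    | h0 => exact hgen 0
    | h1 => exact hgen 1
    | h2 => intro m; rw [hT, chi_t, map_zero, zero_smul]
    | halg c => intro m; rw [AlgHom.commutes]; simp
    | hadd x y hx hy => intro m; rw [add_smul, hx, hy, map_add, map_add, add_smul]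
    | hmul x y hx hy =>
        intro m
        rw [mul_smul, hy, smul_algebraMap_comm, hx, ← mul_smul, ← map_mul,
          mul_comm ((chiHom k i) y), ← map_mul]
  obtain ⟨x, hx⟩ := exists_ne (0 : M)
  obtain ⟨C, hC⟩ := (Submodule.span k {x}).exists_isCompl
  let KR : Submodule (RAlg k) M :=
  { carrier := Submodule.span k {x}
    add_mem' := fun ha hb => (Submodule.span k {x}).add_mem ha hb
    zero_mem' := (Submodule.span k {x}).zero_mem
    smul_mem' := by
      intro r m hm
      show r • m ∈ Submodule.span k {x}
      rw [key, ← hsmul]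
      exact (Submodule.span k {x}).smul_mem _ hm }
  let CR : Submodule (RAlg k) M :=
  { carrier := C
    add_mem' := fun ha hb => C.add_mem ha hb
    zero_mem' := C.zero_mem
    smul_mem' := by
      intro r m hm
      show r • m ∈ C
      rw [key, ← hsmul]
      exact C.smul_mem _ hm }
  have hcompl : IsCompl KR CR := by
    constructor
    · rw [Submodule.disjoint_def]
      intro y hy1 hy2
      exact (Submodule.disjoint_def.mp hC.disjoint) y hy1 hy2
    · rw [codisjoint_iff, eq_top_iff]
      intro m _
      have : m ∈ Submodule.span k {x} ⊔ C := by
        rw [codisjoint_iff.mp hC.codisjoint]; trivial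
      obtain ⟨y, hy, z, hz, rfl⟩ := Submodule.mem_sup.mp this
      exact Submodule.add_mem_sup (show y ∈ KR from hy) (show z ∈ CR from hz)
  have hKtop : Submodule.span k {x} = ⊤ := by
    rcases hind KR CR hcompl with hbot | hbot
    · exfalso
      apply hx
      have : x ∈ KR := Submodule.mem_span_singleton_self x
      rw [hbot] at this
      simpa using this
    · have hCbot : C = ⊥ := by
        rw [eq_bot_iff]
        intro y hy
        have : y ∈ CR := hy
        rw [hbot] at this
        simpa using this
      have := codisjoint_iff.mp hC.codisjoint
      rwa [hCbot, sup_bot_eq] at this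
  have surj : ∀ m : M, ∃ c : k, algebraMap k (RAlg k) c • x = m := by
    intro m
    have : m ∈ Submodule.span k {x} := by rw [hKtop]; trivial
    obtain ⟨c, hc⟩ := Submodule.mem_span_singleton.mp this
    exact ⟨c, by rw [← hsmul]; exact hc⟩
  let ψ : ChiMod k i →ₗ[RAlg k] M :=
  { toFun := fun c => algebraMap k (RAlg k) (ChiMod.toK c) • x
    map_add' := by
      intro c d
      show algebraMap k (RAlg k) (ChiMod.toK c + ChiMod.toK d) • x = _
      rw [map_add, add_smul]
    map_smul' := by
      intro r c
      show algebraMap k (RAlg k) (chiHom k i r * ChiMod.toK c) • x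
          = r • (algebraMap k (RAlg k) (ChiMod.toK c) • x)
      rw [smul_algebraMap_comm, key r x, ← mul_smul, ← map_mul, mul_comm] }
  have hinj : Function.Injective ψ := by
    intro c d h
    have hh : algebraMap k (RAlg k) (ChiMod.toK c) • x
        = algebraMap k (RAlg k) (ChiMod.toK d) • x := h
    have h0 : algebraMap k (RAlg k) (ChiMod.toK c - ChiMod.toK d) • x = 0 := by
      rw [map_sub, sub_smul, hh, sub_self]
    by_contra hne'
    have hcd : ChiMod.toK c - ChiMod.toK d ≠ 0 :=
      sub_ne_zero.mpr (fun hc => hne' hc)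
    apply hx
    calc x = algebraMap k (RAlg k)
            ((ChiMod.toK c - ChiMod.toK d)⁻¹ * (ChiMod.toK c - ChiMod.toK d)) • x := by
            rw [inv_mul_cancel₀ hcd, map_one, one_smul]
      _ = algebraMap k (RAlg k) ((ChiMod.toK c - ChiMod.toK d)⁻¹) •
            (algebraMap k (RAlg k) (ChiMod.toK c - ChiMod.toK d) • x) := by
            rw [map_mul, mul_smul]
      _ = 0 := by rw [h0, smul_zero]
  have hsurj : Function.Surjective ψ := by
    intro m
    obtain ⟨c, hc⟩ := surj m
    exact ⟨c, hc⟩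
  exact ⟨(LinearEquiv.ofBijective ψ ⟨hinj, hsurj⟩).symm⟩

end CaseA
section CaseB
variable {k} {M : Type u} [AddCommGroup M] [Module (RAlg k) M]

lemma caseB (i : Fin 2) (x1 : M) (hx1 : eR k i • x1 = x1) (hu : TR k • x1 ≠ 0)
    (hind : ∀ N P : Submodule (RAlg k) M, IsCompl N P → N = ⊥ ∨ P = ⊥) :
    Nonempty (M ≃ₗ[RAlg k] ↥(ReMod k i)) := by
  have hgen0 : eR k 0 = eR k i ∨ eR k 0 = eR k (i + 1) := by
    fin_cases i
    · exact Or.inl rfl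
    · exact Or.inr rfl
  have hgen1 : eR k 1 = eR k i ∨ eR k 1 = eR k (i + 1) := by
    fin_cases i
    · exact Or.inr rfl
    · exact Or.inl rfl
  have hii : i + 1 + 1 = i := by fin_cases i <;> rfl
  letI : Module k M := Module.compHom M (algebraMap k (RAlg k))
  have hsmul : ∀ (c : k) (m : M), c • m = algebraMap k (RAlg k) c • m := fun _ _ => rfl
  have hEE : eR k i * eR k i = eR k i := e_mul_e i
  have hFF : eR k (i+1) * eR k (i+1) = eR k (i+1) := e_mul_e (i+1)
  have hEF : eR k i * eR k (i+1) = 0 := e_mul_other i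
  have hFE : eR k (i+1) * eR k i = 0 := by
    have := e_mul_other (k := k) (i+1); rwa [hii] at this
  have hEt : eR k i * TR k = TR k * eR k (i+1) := e_mul_t i
  have hFt : eR k (i+1) * TR k = TR k * eR k i := by
    have := e_mul_t (k := k) (i+1); rwa [hii] at this
  have htt : TR k * TR k = (0 : RAlg k) := t_mul_t
  have hFx : eR k (i+1) • x1 = 0 := by
    conv_lhs => rw [← hx1, ← mul_smul, hFE]
    rw [zero_smul]
  have hEu : eR k i • (TR k • x1) = 0 := by
    rw [← mul_smul, hEt, mul_smul, hFx, smul_zero]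
  have hFu : eR k (i+1) • (TR k • x1) = TR k • x1 := by
    rw [← mul_smul, hFt, mul_smul, hx1]
  have htu : TR k • (TR k • x1) = 0 := by
    rw [← mul_smul, htt, zero_smul]
  have hx1ne : x1 ≠ 0 := by
    intro h; apply hu; rw [h, smul_zero]
  -- k-linear action maps
  let actK : RAlg k → (M →ₗ[k] M) := fun r =>
  { toFun := fun m => r • m
    map_add' := fun a b => smul_add r a b
    map_smul' := fun c m => smul_algebraMap_comm r c m }
  have actK_apply : ∀ (r : RAlg k) (m : M), actK r m = r • m := fun _ _ => rfl
  -- the functional lam0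
  let K : Submodule k M := LinearMap.ker (actK (TR k)) ⊓ LinearMap.range (actK (eR k i))
  let W : Submodule k M := K ⊔ LinearMap.range (actK (eR k (i+1)))
  have hx1W : x1 ∉ W := by
    intro hW
    obtain ⟨m, hm, n, hn, hmn⟩ := Submodule.mem_sup.mp hW
    obtain ⟨n', rfl⟩ := hn
    obtain ⟨m', hm'⟩ := hm.2
    have hEm : eR k i • m = m := by
      rw [← hm', actK_apply, ← mul_smul, hEE]
    have htm : TR k • m = 0 := hm.1
    have hEn : eR k i • (actK (eR k (i+1)) n') = 0 := by
      rw [actK_apply, ← mul_smul, hEF, zero_smul]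
    have hxm : x1 = m := by
      rw [← hx1]
      conv_lhs => rw [← hmn]
      rw [smul_add, hEm, hEn, add_zero]
    apply hu
    rw [hxm, htm]
  obtain ⟨f, hfx, hfW⟩ :=
    Submodule.exists_dual_map_eq_bot_of_notMem hx1W inferInstance
  have hf0 : ∀ y ∈ W, f y = 0 := by
    intro y hy
    have : f y ∈ W.map f := Submodule.mem_map_of_mem hy
    rw [hfW] at this
    simpa using this
  let lam0 : M →ₗ[k] k := (f x1)⁻¹ • f
  have hlam0x : lam0 x1 = 1 := by
    show (f x1)⁻¹ • f x1 = 1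
    rw [smul_eq_mul, inv_mul_cancel₀ hfx]
  have hlam0W : ∀ y ∈ W, lam0 y = 0 := by
    intro y hy
    show (f x1)⁻¹ • f y = 0
    rw [hf0 y hy, smul_zero]
  let lamM : M →ₗ[k] k := lam0 ∘ₗ actK (eR k i)
  have hlamM_apply : ∀ m, lamM m = lam0 (eR k i • m) := fun _ => rfl
  -- the functional mu
  let g : M →ₗ[k] M := (actK (TR k)) ∘ₗ (actK (eR k i))
  have hg_apply : ∀ m, g m = TR k • (eR k i • m) := fun _ => rfl
  have hker : LinearMap.ker g ≤ LinearMap.ker lamM := by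
    intro m hm
    rw [LinearMap.mem_ker] at hm ⊢
    rw [hlamM_apply]
    apply hlam0W
    apply Submodule.mem_sup_left
    exact ⟨LinearMap.mem_ker.mpr (LinearMap.mem_ker.mp hm), ⟨m, rfl⟩⟩
  let mu0 : (M ⧸ LinearMap.ker g) →ₗ[k] k := (LinearMap.ker g).liftQ lamM hker
  let eg := g.quotKerEquivRange
  let mu1 : ↥(LinearMap.range g) →ₗ[k] k := mu0 ∘ₗ (eg.symm : _ →ₗ[k] _)
  obtain ⟨Cg, hCg⟩ := (LinearMap.range g).exists_isCompl
  let mu2 : M →ₗ[k] k := mu1 ∘ₗ (Submodule.linearProjOfIsCompl _ _ hCg)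
  let mu : M →ₗ[k] k := mu2 ∘ₗ actK (eR k (i+1))
  have hmu_apply : ∀ m, mu m = mu2 (eR k (i+1) • m) := fun _ => rfl
  have hmu2g : ∀ m, mu2 (g m) = lamM m := by
    intro m
    have h1 : Submodule.linearProjOfIsCompl _ _ hCg (g m)
        = ⟨g m, LinearMap.mem_range_self g m⟩ :=
      Submodule.linearProjOfIsCompl_apply_left hCg ⟨g m, LinearMap.mem_range_self g m⟩
    show mu1 (Submodule.linearProjOfIsCompl _ _ hCg (g m)) = lamM m
    rw [h1]
    show mu0 (eg.symm ⟨g m, LinearMap.mem_range_self g m⟩) = lamM m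
    have h2 : eg.symm ⟨g m, LinearMap.mem_range_self g m⟩ = (LinearMap.ker g).mkQ m :=
      g.quotKerEquivRange_symm_apply_image m (LinearMap.mem_range_self g m)
    rw [h2, Submodule.mkQ_apply, Submodule.liftQ_apply]
  have hmut : ∀ m, mu (TR k • m) = lamM m := by
    intro m
    rw [hmu_apply, ← mul_smul, hFt, mul_smul]
    exact hmu2g m
  have hmuE : ∀ m, mu (eR k i • m) = 0 := by
    intro m
    rw [hmu_apply, ← mul_smul, hFE, zero_smul, map_zero]
  have hmuF : ∀ m, mu (eR k (i+1) • m) = mu m := by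
    intro m
    rw [hmu_apply, ← mul_smul, hFF, hmu_apply]
  have hlamE : ∀ m, lamM (eR k i • m) = lamM m := by
    intro m
    rw [hlamM_apply, ← mul_smul, hEE, hlamM_apply]
  have hlamF : ∀ m, lamM (eR k (i+1) • m) = 0 := by
    intro m
    rw [hlamM_apply, ← mul_smul, hEF, zero_smul, map_zero]
  have hlamt : ∀ m, lamM (TR k • m) = 0 := by
    intro m
    rw [hlamM_apply, ← mul_smul, hEt, mul_smul]
    apply hlam0W
    apply Submodule.mem_sup_left
    have hFm : eR k (i+1) • (eR k (i+1) • m) = eR k (i+1) • m := by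
      rw [← mul_smul, hFF]
    refine ⟨LinearMap.mem_ker.mpr ?_, ⟨TR k • (eR k (i+1) • m), ?_⟩⟩
    · rw [actK_apply, ← mul_smul, htt, zero_smul]
    · rw [actK_apply, ← mul_smul, hEt, mul_smul, hFm]
  -- the projection
  let piK : M →ₗ[k] M :=
    ((LinearMap.toSpanSingleton k M x1).comp lamM) + ((LinearMap.toSpanSingleton k M (TR k • x1)).comp mu)
  have hpiK : ∀ m, piK m
      = algebraMap k (RAlg k) (lamM m) • x1 + algebraMap k (RAlg k) (mu m) • (TR k • x1) :=
    fun _ => rfl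
  have hP : ∀ (r : RAlg k) (m : M), piK (r • m) = r • piK m := by
    have hPE : ∀ m, piK (eR k i • m) = eR k i • piK m := by
      intro m
      rw [hpiK, hpiK, hmuE, map_zero, zero_smul, add_zero, hlamE, smul_add,
        smul_algebraMap_comm, smul_algebraMap_comm, hx1, hEu, smul_zero, add_zero]
    have hPF : ∀ m, piK (eR k (i+1) • m) = eR k (i+1) • piK m := by
      intro m
      rw [hpiK, hpiK, hlamF, map_zero, zero_smul, zero_add, hmuF, smul_add,
        smul_algebraMap_comm, smul_algebraMap_comm, hFx, hFu, smul_zero, zero_add]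
    have hPt : ∀ m, piK (TR k • m) = TR k • piK m := by
      intro m
      rw [hpiK, hpiK, hlamt, map_zero, zero_smul, zero_add, hmut, smul_add,
        smul_algebraMap_comm, smul_algebraMap_comm, htu, smul_zero, add_zero]
    intro r
    induction r using ralg_induction with
    | h0 =>
        rcases hgen0 with h | h <;> rw [h]
        · exact hPE
        · exact hPF
    | h1 =>
        rcases hgen1 with h | h <;> rw [h]
        · exact hPE
        · exact hPF
    | h2 => exact hPt
    | halg c => intro m; rw [← hsmul, map_smul, hsmul]
    | hadd x y hx hy => intro m; rw [add_smul, map_add, hx m, hy m, add_smul]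
    | hmul x y hx hy => intro m; rw [mul_smul, hx (y • m), hy m, ← mul_smul]
  let piR : M →ₗ[RAlg k] M :=
  { toFun := piK
    map_add' := piK.map_add
    map_smul' := fun r m => hP r m }
  have piR_apply : ∀ m, piR m = piK m := fun _ => rfl
  let N : Submodule (RAlg k) M := Submodule.span (RAlg k) {x1}
  have hmemN : ∀ m, piR m ∈ N := by
    intro m
    rw [piR_apply, hpiK]
    apply N.add_mem
    · exact N.smul_mem _ (Submodule.mem_span_singleton_self x1)
    · exact N.smul_mem _ (N.smul_mem _ (Submodule.mem_span_singleton_self x1))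
  have hpix1 : piR x1 = x1 := by
    rw [piR_apply, hpiK]
    have h1 : lamM x1 = 1 := by rw [hlamM_apply, hx1, hlam0x]
    have h2 : mu x1 = 0 := by rw [hmu_apply, hFx, map_zero]
    rw [h1, h2, map_one, one_smul, map_zero, zero_smul, add_zero]
  have hidN : ∀ y ∈ N, piR y = y := by
    intro y hy
    obtain ⟨r, rfl⟩ := Submodule.mem_span_singleton.mp hy
    rw [map_smul, hpix1]
  have hcompl : IsCompl N (LinearMap.ker piR) := by
    constructor
    · rw [Submodule.disjoint_def]
      intro y hy1 hy2
      rw [← hidN y hy1]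
      exact LinearMap.mem_ker.mp hy2
    · rw [codisjoint_iff, eq_top_iff]
      intro m _
      have hker' : m - piR m ∈ LinearMap.ker piR := by
        rw [LinearMap.mem_ker, map_sub, hidN _ (hmemN m), sub_self]
      have hdec : m = piR m + (m - piR m) := by abel
      rw [hdec]
      exact Submodule.add_mem_sup (hmemN m) hker'
  have hNtop : ∀ m : M, m ∈ N := by
    rcases hind N (LinearMap.ker piR) hcompl with hbot | hbot
    · exfalso
      apply hx1ne
      have hx1N : x1 ∈ N := Submodule.mem_span_singleton_self x1
      rw [hbot] at hx1N
      simpa using hx1N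
    · intro m
      have hker' : m - piR m ∈ LinearMap.ker piR := by
        rw [LinearMap.mem_ker, map_sub, hidN _ (hmemN m), sub_self]
      rw [hbot] at hker'
      have h0 : m - piR m = 0 := by simpa using hker'
      have hm : m = piR m := by
        have := sub_eq_zero.mp h0; exact this
      rw [hm]; exact hmemN m
  -- independence
  have hscale : ∀ (a : k) (m : M), algebraMap k (RAlg k) a • m = 0 → a ≠ 0 → m = 0 := by
    intro a m h ha
    have h2 : algebraMap k (RAlg k) (a⁻¹ * a) • m = 0 := by
      rw [map_mul, mul_smul, h, smul_zero]
    rwa [inv_mul_cancel₀ ha, map_one, one_smul] at h2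
  have hindep : ∀ a c : k,
      algebraMap k (RAlg k) a • x1 + algebraMap k (RAlg k) c • (TR k • x1) = 0 →
      a = 0 ∧ c = 0 := by
    intro a c h
    have hE : algebraMap k (RAlg k) a • x1 = 0 := by
      have h2 := congrArg (fun m => eR k i • m) h
      simp only [smul_add, smul_zero] at h2
      rw [smul_algebraMap_comm, smul_algebraMap_comm, hx1, hEu, smul_zero, add_zero] at h2
      exact h2
    have ha : a = 0 := by
      by_contra ha
      exact hx1ne (hscale a x1 hE ha)
    have hc : c = 0 := by
      rw [hE, zero_add] at h
      by_contra hc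
      exact hu (hscale c (TR k • x1) h hc)
    exact ⟨ha, hc⟩
  -- the isomorphism
  let psi : ↥(ReMod k i) →ₗ[RAlg k] M :=
    (LinearMap.toSpanSingleton (RAlg k) M x1).comp (ReMod k i).subtype
  have hpsi : ∀ y : ↥(ReMod k i), psi y = (y : RAlg k) • x1 := fun _ => rfl
  have h0map : ∀ y : ↥(ReMod k i), psi y = 0 → y = 0 := by
    intro y hy
    obtain ⟨a, c, hac⟩ := ReMod_span y.2
    rw [hpsi, hac, add_smul] at hy
    have h1 : (a • eR k i) • x1 = algebraMap k (RAlg k) a • x1 := by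
      rw [Algebra.smul_def, mul_smul, hx1]
    have h2 : (c • (TR k * eR k i)) • x1 = algebraMap k (RAlg k) c • (TR k • x1) := by
      rw [Algebra.smul_def, mul_smul, mul_smul, hx1]
    rw [h1, h2] at hy
    obtain ⟨ha, hc⟩ := hindep a c hy
    apply Subtype.ext
    show (y : RAlg k) = 0
    rw [hac, ha, hc, zero_smul, zero_smul, add_zero]
  have hinj : Function.Injective psi := by
    rw [← LinearMap.ker_eq_bot (M := ↥(ReMod k i)) (f := psi), eq_bot_iff]
    intro y hy
    exact (Submodule.mem_bot _).mpr (h0map y (LinearMap.mem_ker.mp hy))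
  have hsurj : Function.Surjective psi := by
    intro m
    obtain ⟨r, hr⟩ := Submodule.mem_span_singleton.mp (hNtop m)
    refine ⟨⟨r * eR k i, ?_⟩, ?_⟩
    · rw [ReMod, Submodule.mem_span_singleton]
      exact ⟨r, rfl⟩
    · rw [hpsi]
      show (r * eR k i) • x1 = m
      rw [mul_smul, hx1]
      exact hr
  exact ⟨(LinearEquiv.ofBijective psi ⟨hinj, hsurj⟩).symm⟩

end CaseB
/-!
STATEMENT 5: Every nonzero indecomposable left `R`-module is isomorphic to one of
`χ₁`, `χ₂`, `Re₁`, `Re₂`.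
-/

theorem stmt_5 (M : Type u) [AddCommGroup M] [Module (RAlg k) M]
    (hne : Nontrivial M)
    (hind : ∀ N P : Submodule (RAlg k) M, IsCompl N P → N = ⊥ ∨ P = ⊥) :
    Nonempty (M ≃ₗ[RAlg k] ChiMod k 0) ∨
    Nonempty (M ≃ₗ[RAlg k] ChiMod k 1) ∨
    Nonempty (M ≃ₗ[RAlg k] ↥(ReMod k 0)) ∨
    Nonempty (M ≃ₗ[RAlg k] ↥(ReMod k 1)) := by
  have h01 : ((0 : Fin 2) + 1) = 1 := rfl
  have h10 : ((1 : Fin 2) + 1) = 0 := rfl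
  have he01 : eR k 0 * eR k 1 = 0 := by
    have := e_mul_other (k := k) 0; rwa [h01] at this
  have he10 : eR k 1 * eR k 0 = 0 := by
    have := e_mul_other (k := k) 1; rwa [h10] at this
  have hsum : ∀ m : M, eR k 0 • m + eR k 1 • m = m := by
    intro m; rw [← add_smul, e_add_e, one_smul]
  by_cases hT : ∀ m : M, TR k • m = 0
  · have commE : ∀ (ii : Fin 2) (r : RAlg k) (m : M),
        eR k ii • (r • m) = r • (eR k ii • m) := by
      intro ii r
      induction r using ralg_induction with
      | h0 =>
          intro m
          rw [← mul_smul, ← mul_smul, e_mul_e', e_mul_e']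
          by_cases h : ii = 0
          · subst h; simp
          · rw [if_neg h, if_neg (Ne.symm h)]
      | h1 =>
          intro m
          rw [← mul_smul, ← mul_smul, e_mul_e', e_mul_e']
          by_cases h : ii = 1
          · subst h; simp
          · rw [if_neg h, if_neg (Ne.symm h)]
      | h2 => intro m; rw [hT m, smul_zero, hT]
      | halg c => intro m; rw [smul_algebraMap_comm]
      | hadd x y hx hy => intro m; rw [add_smul, smul_add, hx m, hy m, ← add_smul]
      | hmul x y hx hy => intro m; rw [mul_smul, hx (y • m), hy m, ← mul_smul]
    let actR : Fin 2 → (M →ₗ[RAlg k] M) := fun ii =>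
    { toFun := fun m => eR k ii • m
      map_add' := fun a b => smul_add _ a b
      map_smul' := fun r m => commE ii r m }
    have actR_apply : ∀ ii m, actR ii m = eR k ii • m := fun _ _ => rfl
    have hcompl : IsCompl (LinearMap.range (actR 0)) (LinearMap.range (actR 1)) := by
      constructor
      · rw [Submodule.disjoint_def]
        rintro m ⟨a, rfl⟩ ⟨b, hb⟩
        have h1 : eR k 0 • (actR 0 a) = actR 0 a := by
          rw [actR_apply, ← mul_smul, e_mul_e]
        have h2 : eR k 0 • (actR 1 b) = 0 := by
          rw [actR_apply, ← mul_smul, he01, zero_smul]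
        calc actR 0 a = eR k 0 • actR 0 a := h1.symm
          _ = eR k 0 • actR 1 b := by rw [hb]
          _ = 0 := h2
      · rw [codisjoint_iff, eq_top_iff]
        intro m _
        have hdec : m = actR 0 m + actR 1 m := (hsum m).symm
        rw [hdec]
        exact Submodule.add_mem_sup (LinearMap.mem_range_self _ m)
          (LinearMap.mem_range_self _ m)
    rcases hind _ _ hcompl with hbot | hbot
    · have hE : ∀ m : M, eR k 1 • m = m := by
        intro m
        have hz : eR k 0 • m = 0 := by
          have hmem : actR 0 m ∈ (⊥ : Submodule (RAlg k) M) :=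
            hbot ▸ LinearMap.mem_range_self _ m
          simpa [actR_apply] using hmem
        have := hsum m
        rwa [hz, zero_add] at this
      exact Or.inr (Or.inl (caseA 1 hT hE hne hind))
    · have hE : ∀ m : M, eR k 0 • m = m := by
        intro m
        have hz : eR k 1 • m = 0 := by
          have hmem : actR 1 m ∈ (⊥ : Submodule (RAlg k) M) :=
            hbot ▸ LinearMap.mem_range_self _ m
          simpa [actR_apply] using hmem
        have := hsum m
        rwa [hz, add_zero] at this
      exact Or.inl (caseA 0 hT hE hne hind)
  · push_neg at hT
    obtain ⟨m, hm⟩ := hT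
    have hdec : TR k • m = TR k • (eR k 0 • m) + TR k • (eR k 1 • m) := by
      rw [← smul_add, hsum m]
    by_cases h0 : TR k • (eR k 0 • m) = 0
    · have h1 : TR k • (eR k 1 • m) ≠ 0 := by
        intro h
        apply hm
        rw [hdec, h0, h, add_zero]
      have hx1 : eR k 1 • (eR k 1 • m) = eR k 1 • m := by
        rw [← mul_smul, e_mul_e]
      exact Or.inr (Or.inr (Or.inr (caseB 1 (eR k 1 • m) hx1 h1 hind)))
    · have hx1 : eR k 0 • (eR k 0 • m) = eR k 0 • m := by
        rw [← mul_smul, e_mul_e]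
      exact Or.inr (Or.inr (Or.inl (caseB 0 (eR k 0 • m) hx1 h0 hind)))
end

section
/- Let k be a field and let 𝓡 be a finite-dimensional k-algebra which is self-injective (i.e., 𝓡 is injective as a left module over itself) and has the property that every indecomposable left 𝓡-module is either projective or simple. Then every left 𝓡-module is isomorphic to a direct sum of indecomposable 𝓡-modules. -/
set_option maxHeartbeats 1000000
set_option synthInstance.maxHeartbeats 400000

/-!
STATEMENT 7: Let `k` be a field and `𝓡` a finite-dimensional self-injective `k`-algebra
such that every indecomposable left `𝓡`-module is projective or simple.  Then every
left `𝓡`-module is isomorphic to a direct sum of indecomposable `𝓡`-modules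
(equivalently, is the internal direct sum of a family of indecomposable submodules).
-/

universe u

/-- A module is indecomposable: it is nonzero, and whenever it is the internal direct
sum of two submodules, one of them is zero. -/
def IsIndecomposableModule (R : Type u) [Ring R] (M : Type u) [AddCommGroup M]
    [Module R M] : Prop :=
  Nontrivial M ∧ ∀ N P : Submodule R M, IsCompl N P → N = ⊥ ∨ P = ⊥

section Helpers

universe v w

variable {R : Type u} [Ring R]

private lemma modInj_of_subsingleton (Q : Type v) [AddCommGroup Q] [Module R Q]
    [Subsingleton Q] : Module.Injective R Q where
  out X Y _ _ _ _ f hf g := ⟨0, fun x => Subsingleton.elim _ _⟩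

private lemma modInj_retract {Q W : Type v} [AddCommGroup Q] [Module R Q] [AddCommGroup W]
    [Module R W] (s : Q →ₗ[R] W) (r : W →ₗ[R] Q) (hrs : ∀ q, r (s q) = q)
    (hW : Module.Injective R W) : Module.Injective R Q where
  out X Y _ _ _ _ f hf g := by
    obtain ⟨h, hh⟩ := hW.out f hf (s ∘ₗ g)
    refine ⟨r ∘ₗ h, fun x => ?_⟩
    have := hh x
    simp only [LinearMap.comp_apply] at this ⊢
    rw [this]
    exact hrs _

private lemma modInj_equiv {Q W : Type v} [AddCommGroup Q] [Module R Q] [AddCommGroup W]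
    [Module R W] (e : W ≃ₗ[R] Q) (hW : Module.Injective R W) : Module.Injective R Q :=
  modInj_retract e.symm.toLinearMap e.toLinearMap (fun q => e.apply_symm_apply q) hW

private lemma modInj_pi {ι : Type u} {A : ι → Type u} [∀ i, AddCommGroup (A i)]
    [∀ i, Module R (A i)] (h : ∀ i, Module.Injective R (A i)) :
    Module.Injective R (∀ i, A i) where
  out X Y _ _ _ _ f hf g := by
    choose h' hh using fun i => (h i).out f hf ((LinearMap.proj (φ := A) i) ∘ₗ g)
    exact ⟨LinearMap.pi h', fun x => funext fun i => hh i x⟩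

private lemma modInj_prod {A B : Type v} [AddCommGroup A] [Module R A] [AddCommGroup B]
    [Module R B] (hA : Module.Injective R A) (hB : Module.Injective R B) :
    Module.Injective R (A × B) where
  out X Y _ _ _ _ f hf g := by
    obtain ⟨h₁, hh₁⟩ := hA.out f hf ((LinearMap.fst R A B) ∘ₗ g)
    obtain ⟨h₂, hh₂⟩ := hB.out f hf ((LinearMap.snd R A B) ∘ₗ g)
    exact ⟨h₁.prod h₂, fun x => Prod.ext (hh₁ x) (hh₂ x)⟩

private lemma isIndecomposable_congr {M₁ M₂ : Type u} [AddCommGroup M₁] [Module R M₁]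
    [AddCommGroup M₂] [Module R M₂] (e : M₁ ≃ₗ[R] M₂) (h : IsIndecomposableModule R M₁) :
    IsIndecomposableModule R M₂ := by
  obtain ⟨h1, h2⟩ := h
  set F : Submodule R M₁ ≃o Submodule R M₂ := Submodule.orderIsoMapComap e
  have hFbot : F ⊥ = ⊥ := by
    simp [F, Submodule.orderIsoMapComap]
  refine ⟨e.symm.toEquiv.nontrivial, fun N P hNP => ?_⟩
  rcases h2 (F.symm N) (F.symm P) (F.symm.isCompl hNP) with h' | h'
  · left
    have := congrArg F h'
    rwa [OrderIso.apply_symm_apply, hFbot] at this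
  · right
    have := congrArg F h'
    rwa [OrderIso.apply_symm_apply, hFbot] at this

private lemma isIndecomposable_of_isSimple {X : Type u} [AddCommGroup X] [Module R X]
    (h : IsSimpleModule R X) : IsIndecomposableModule R X := by
  haveI := h
  refine ⟨IsSimpleModule.nontrivial R X, fun N P hNP => ?_⟩
  rcases eq_bot_or_eq_top N with h' | h'
  · exact Or.inl h'
  · rw [h'] at hNP
    exact Or.inr (disjoint_top.mp hNP.disjoint.symm)

private lemma isSemisimple_of_isSimple {X : Type u} [AddCommGroup X] [Module R X]
    (h : IsSimpleModule R X) : IsSemisimpleModule R X := by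
  haveI := h
  apply IsSemisimpleModule.of_sSup_simples_eq_top
  rw [eq_top_iff]
  apply le_sSup
  show IsSimpleModule R ↥(⊤ : Submodule R X)
  exact IsSimpleModule.congr Submodule.topEquiv

private lemma sSupIndep_union_aux {α : Type*} [CompleteLattice α] [IsModularLattice α]
    {s t : Set α} (hs : sSupIndep s) (hst : Disjoint (sSup s) (sSup t))
    {a : α} (ha : a ∈ s) : Disjoint a (sSup ((s ∪ t) \ {a})) := by
  set X := sSup (s \ {a}) with hX
  set T := sSup t with hT
  have hle : sSup ((s ∪ t) \ {a}) ≤ X ⊔ T := by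
    apply sSup_le
    intro b hb
    obtain ⟨hb', hba⟩ := hb
    rcases hb' with hmem | hmem
    · exact le_trans (le_sSup (Set.mem_diff_of_mem hmem hba)) le_sup_left
    · exact le_trans (le_sSup hmem) le_sup_right
  have h2 : T ⊓ (X ⊔ a) ≤ ⊥ := by
    have hXa : X ⊔ a ≤ sSup s := sup_le (sSup_le_sSup Set.diff_subset) (le_sSup ha)
    calc T ⊓ (X ⊔ a) ≤ T ⊓ sSup s := inf_le_inf_left T hXa
    _ ≤ ⊥ := hst.symm.le_bot
  have h1 : (X ⊔ T) ⊓ (X ⊔ a) = X ⊔ T ⊓ (X ⊔ a) := sup_inf_assoc_of_le T le_sup_left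
  have key : a ⊓ (X ⊔ T) ≤ ⊥ := by
    have step1 : a ⊓ (X ⊔ T) ≤ X := by
      calc a ⊓ (X ⊔ T) ≤ (X ⊔ a) ⊓ (X ⊔ T) := inf_le_inf_right _ le_sup_right
      _ = (X ⊔ T) ⊓ (X ⊔ a) := inf_comm _ _
      _ = X ⊔ T ⊓ (X ⊔ a) := h1
      _ ≤ X ⊔ ⊥ := sup_le_sup_left h2 X
      _ = X := sup_bot_eq X
    calc a ⊓ (X ⊔ T) ≤ a ⊓ X := le_inf inf_le_left step1
    _ ≤ ⊥ := (hs ha).le_bot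
  exact disjoint_iff_inf_le.mpr (le_trans (inf_le_inf_left a hle) key)

private lemma sSupIndep_union {α : Type*} [CompleteLattice α] [IsModularLattice α]
    {s t : Set α} (hs : sSupIndep s) (ht : sSupIndep t)
    (hst : Disjoint (sSup s) (sSup t)) : sSupIndep (s ∪ t) := by
  intro a ha
  rcases ha with h | h
  · exact sSupIndep_union_aux hs hst h
  · have := sSupIndep_union_aux ht hst.symm h
    rwa [Set.union_comm] at this

variable {M : Type u} [AddCommGroup M] [Module R M]

private lemma map_sSup_subtype (N : Submodule R M) (T : Set (Submodule R ↥N)) :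
    sSup ((Submodule.map N.subtype) '' T) = (sSup T).map N.subtype := by
  rw [sSup_image, sSup_eq_iSup]
  simp_rw [Submodule.map_iSup]

private lemma sSupIndep_map_subtype {N : Submodule R M} {T : Set (Submodule R ↥N)}
    (hT : sSupIndep T) : sSupIndep ((Submodule.map N.subtype) '' T) := by
  rintro _ ⟨a, haT, rfl⟩
  have hinj : Function.Injective N.subtype := N.injective_subtype
  have hsub : (Submodule.map N.subtype '' T) \ {a.map N.subtype} ⊆
      Submodule.map N.subtype '' (T \ {a}) := by
    rintro _ ⟨⟨b, hbT, rfl⟩, hbne⟩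
    refine ⟨b, ⟨hbT, fun h => hbne ?_⟩, rfl⟩
    simp only [Set.mem_singleton_iff] at h ⊢
    rw [h]
  have hd : Disjoint (a.map N.subtype) ((sSup (T \ {a})).map N.subtype) := by
    rw [disjoint_iff, ← Submodule.map_inf _ hinj, (hT haT).eq_bot, Submodule.map_bot]
  exact hd.mono_right (le_trans (sSup_le_sSup hsub) (map_sSup_subtype N (T \ {a})).le)

private lemma exists_isCompl_of_modInj {P : Submodule R M} (h : Module.Injective R ↥P) :
    ∃ N : Submodule R M, IsCompl P N := by
  obtain ⟨r, hr⟩ := h.out P.subtype P.injective_subtype LinearMap.id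
  refine ⟨LinearMap.ker r, ⟨?_, ?_⟩⟩
  · rw [disjoint_iff, Submodule.eq_bot_iff]
    rintro x ⟨hxP, hxk⟩
    have h1 : r x = ⟨x, hxP⟩ := hr ⟨x, hxP⟩
    have h2 : r x = 0 := hxk
    have : (⟨x, hxP⟩ : ↥P) = 0 := by rw [← h1, h2]
    exact congrArg Subtype.val this
  · rw [codisjoint_iff, eq_top_iff]
    intro x _
    rw [Submodule.mem_sup]
    refine ⟨↑(r x), (r x).2, x - ↑(r x), ?_, by abel⟩
    rw [LinearMap.mem_ker, map_sub]
    have h2 : r ((r x : M)) = r x := hr (r x)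
    rw [h2, sub_self]

private lemma modInj_sup {A B : Submodule R M} (hAB : Disjoint A B)
    (hA : Module.Injective R ↥A) (hB : Module.Injective R ↥B) :
    Module.Injective R ↥(A ⊔ B) := by
  have hAC : A ≤ A ⊔ B := le_sup_left
  have hBC : B ≤ A ⊔ B := le_sup_right
  set A' := A.comap (A ⊔ B).subtype with hA'
  set B' := B.comap (A ⊔ B).subtype with hB'
  have hcompl : IsCompl A' B' := by
    constructor
    · rw [disjoint_iff, Submodule.eq_bot_iff]
      rintro x ⟨hx1, hx2⟩
      have hx : (x : M) ∈ A ⊓ B := ⟨hx1, hx2⟩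
      rw [hAB.eq_bot] at hx
      exact Subtype.ext hx
    · rw [codisjoint_iff, eq_top_iff]
      rintro ⟨x, hx⟩ _
      obtain ⟨y, hy, z, hz, rfl⟩ := Submodule.mem_sup.mp hx
      rw [Submodule.mem_sup]
      exact ⟨⟨y, hAC hy⟩, hy, ⟨z, hBC hz⟩, hz, rfl⟩
  have e1 : (↥A' × ↥B') ≃ₗ[R] ↥(A ⊔ B) := Submodule.prodEquivOfIsCompl A' B' hcompl
  have eA : ↥A' ≃ₗ[R] ↥A := Submodule.comapSubtypeEquivOfLe hAC
  have eB : ↥B' ≃ₗ[R] ↥B := Submodule.comapSubtypeEquivOfLe hBC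
  exact modInj_equiv e1 (modInj_prod (modInj_equiv eA.symm hA) (modInj_equiv eB.symm hB))

private lemma modInj_finsetSup {s : Set (Submodule R M)} (hs : sSupIndep s)
    (hinj : ∀ A ∈ s, Module.Injective R ↥A) (t : Finset (Submodule R M)) :
    ↑t ⊆ s → Module.Injective R ↥(t.sup id) := by
  classical
  induction t using Finset.induction_on with
  | empty =>
    intro _
    haveI : Subsingleton ↥(⊥ : Submodule R M) :=
      Submodule.subsingleton_iff_eq_bot.mpr rfl
    rw [Finset.sup_empty]
    exact modInj_of_subsingleton _
  | @insert a t' hat' ih =>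
    intro hts
    have ha : a ∈ s := hts (Finset.mem_insert_self a t')
    have ht's : ↑t' ⊆ s := fun b hb => hts (Finset.mem_insert_of_mem hb)
    have hdis : Disjoint a (t'.sup id) := by
      refine (hs ha).mono_right (Finset.sup_le fun b hb => ?_)
      refine le_sSup ⟨ht's hb, fun hba => hat' ?_⟩
      simp only [Set.mem_singleton_iff, id] at hba
      rwa [← hba]
    rw [Finset.sup_insert]
    exact modInj_sup hdis (hinj a ha) (ih ht's)

private lemma modInj_sSup [IsNoetherianRing R] {s : Set (Submodule R M)} (hs : sSupIndep s)
    (hinj : ∀ A ∈ s, Module.Injective R ↥A) : Module.Injective R ↥(sSup s) := by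
  apply Module.Baer.injective
  intro I g
  haveI : Module.Finite R ↥I := Module.Finite.iff_fg.mpr (IsNoetherian.noetherian I)
  set C : Submodule R M := (LinearMap.range g).map (sSup s).subtype with hC
  have hCfg : C.FG := by
    apply Submodule.FG.map
    rw [← Submodule.map_top]
    exact Submodule.FG.map _ (Module.finite_def.mp ‹_›)
  have hCle : C ≤ sSup s := Submodule.map_subtype_le _ _
  obtain ⟨t, hts, hCt⟩ := (CompleteLattice.isCompactElement_iff_exists_le_sSup_of_le_sSup _ C).mp
    ((Submodule.fg_iff_compact C).mp hCfg) s hCle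
  have hBinj := modInj_finsetSup hs hinj t hts
  have hBle : t.sup id ≤ sSup s := Finset.sup_le fun b hb => le_sSup (hts hb)
  have hmem : ∀ x : ↥I, ((sSup s).subtype ∘ₗ g) x ∈ t.sup id := by
    intro x
    exact hCt ⟨g x, ⟨x, rfl⟩, rfl⟩
  obtain ⟨h, hh⟩ := hBinj.out I.subtype I.injective_subtype
    (LinearMap.codRestrict (t.sup id) ((sSup s).subtype ∘ₗ g) hmem)
  refine ⟨(Submodule.inclusion hBle) ∘ₗ h, fun x hx => ?_⟩
  have h1 : h x = LinearMap.codRestrict (t.sup id) ((sSup s).subtype ∘ₗ g) hmem ⟨x, hx⟩ :=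
    hh ⟨x, hx⟩
  apply Subtype.ext
  show ((h x : ↥(t.sup id)) : M) = ↑(g ⟨x, hx⟩)
  rw [h1]
  rfl

end Helpers

open scoped Classical in
theorem stmt_7 (k : Type u) [Field k] (R : Type u) [Ring R] [Algebra k R]
    [FiniteDimensional k R]
    (hselfinj : Module.Injective R R)
    (hind : ∀ (M : Type u) [AddCommGroup M] [Module R M],
      IsIndecomposableModule R M → (Module.Projective R M ∨ IsSimpleModule R M))
    (M : Type u) [AddCommGroup M] [Module R M] :
    ∃ (ι : Type u) (p : ι → Submodule R M),
      (∀ i, IsIndecomposableModule R ↥(p i)) ∧ DirectSum.IsInternal p := by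
  classical
  haveI hart : IsArtinianRing R := isArtinian_of_tower k inferInstance
  haveI hnoe : IsNoetherianRing R := isNoetherian_of_tower k inferInstance
  -- finitely generated projective modules are injective
  have key_inj : ∀ (Q : Type u) [AddCommGroup Q] [Module R Q],
      Module.Finite R Q → Module.Projective R Q → Module.Injective R Q := by
    intro Q _ _ hfin hproj
    obtain ⟨n, f, gmap, hsurj, hginj, hfg⟩ :=
      Module.Finite.exists_comp_eq_id_of_projective R Q
    have hpi : Module.Injective R (ULift.{u} (Fin n) → R) := modInj_pi fun _ => hselfinj
    have hfn : Module.Injective R (Fin n → R) :=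
      modInj_equiv (LinearEquiv.funCongrLeft R R (Equiv.ulift.symm : Fin n ≃ ULift.{u} (Fin n))) hpi
    exact modInj_retract gmap f (fun q => LinearMap.congr_fun hfg q) hfn
  -- Zorn: a maximal independent family of indecomposable injective submodules
  set 𝒮 : Set (Set (Submodule R M)) :=
    {s | sSupIndep s ∧ ∀ Q ∈ s, IsIndecomposableModule R ↥Q ∧ Module.Injective R ↥Q} with h𝒮
  obtain ⟨s₀, hs₀max⟩ := zorn_subset 𝒮 (by
    intro c hc hchain
    refine ⟨⋃₀ c, ⟨?_, ?_⟩, fun s hs => Set.subset_sUnion_of_mem hs⟩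
    · exact iSupIndep_sUnion_of_directed hchain.directedOn (fun a ha => (hc ha).1)
    · rintro Q ⟨a, hac, hQa⟩
      exact (hc hac).2 Q hQa)
  obtain ⟨hs₀ind, hs₀mem⟩ := hs₀max.prop
  set P := sSup s₀ with hP
  have hPinj : Module.Injective R ↥P := modInj_sSup hs₀ind (fun A hA => (hs₀mem A hA).2)
  obtain ⟨N, hPN⟩ := exists_isCompl_of_modInj hPinj
  -- every f.g. indecomposable submodule inside N is simple
  have key_simple : ∀ Q : Submodule R M, Q ≤ N → Q.FG → IsIndecomposableModule R ↥Q →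
      IsSimpleModule R ↥Q := by
    intro Q hQN hQfg hQind
    rcases hind ↥Q hQind with hproj | hsimp
    · exfalso
      haveI : Module.Finite R ↥Q := Module.Finite.iff_fg.mpr hQfg
      have hQinj : Module.Injective R ↥Q := key_inj ↥Q inferInstance hproj
      have hQne : Q ≠ ⊥ := by
        haveI := hQind.1
        exact Submodule.nontrivial_iff_ne_bot.mp hQind.1
      have hdisj : Disjoint Q P := hPN.disjoint.symm.mono_left hQN
      have hnew : insert Q s₀ ∈ 𝒮 := by
        constructor
        · have : sSupIndep ({Q} ∪ s₀) := by
            refine sSupIndep_union (sSupIndep_singleton Q) hs₀ind ?_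
            rwa [sSup_singleton]
          rwa [Set.singleton_union] at this
        · rintro A hA
          rcases Set.mem_insert_iff.mp hA with rfl | hA
          · exact ⟨hQind, hQinj⟩
          · exact hs₀mem A hA
      have hQs₀ : Q ∈ s₀ := hs₀max.2 hnew (Set.subset_insert Q s₀) (Set.mem_insert Q s₀)
      have : Q ≤ ⊥ := le_trans (le_inf le_rfl (le_sSup hQs₀)) hdisj.le_bot
      exact hQne (le_bot_iff.mp this)
    · exact hsimp
  -- N is semisimple
  have hNss : IsSemisimpleModule R ↥N := by
    apply isSemisimpleModule_of_isSemisimpleModule_submodule'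
      (p := fun x : ↥N => Submodule.span R {x})
    · intro x
      show IsSemisimpleModule R ↥(Submodule.span R {x})
      set W : Submodule R ↥N := Submodule.span R {x} with hW
      haveI : IsArtinian R ↥W :=
        isArtinian_of_fg_of_artinian W (Submodule.fg_span_singleton x)
      haveI : IsNoetherian R ↥W :=
        isNoetherian_of_fg_of_noetherian W (Submodule.fg_span_singleton x)
      have H : ∀ Q : Submodule R ↥W, IsIndecomposableModule R ↥Q → IsSimpleModule R ↥Q := by
        intro Q hQ
        set Q₁ := Q.map W.subtype with hQ₁
        set Q₂ := Q₁.map N.subtype with hQ₂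
        have e2 : ↥Q ≃ₗ[R] ↥Q₂ := (W.equivSubtypeMap Q).trans (N.equivSubtypeMap Q₁)
        have hQ₂N : Q₂ ≤ N := Submodule.map_subtype_le N Q₁
        have hQ₂fg : Q₂.FG := ((IsNoetherian.noetherian Q).map _).map _
        haveI := key_simple Q₂ hQ₂N hQ₂fg (isIndecomposable_congr e2 hQ)
        exact IsSimpleModule.congr e2
      have main : ∀ Q : Submodule R ↥W, IsSemisimpleModule R ↥Q := by
        intro Q
        refine WellFoundedLT.induction (motive := fun Q : Submodule R ↥W => IsSemisimpleModule R ↥Q) Q ?_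
        intro Q IH
        rcases subsingleton_or_nontrivial ↥Q with hss | hnt
        · haveI : Subsingleton (Submodule R ↥Q) := inferInstance
          exact IsSemisimpleModule.of_sSup_simples_eq_top (Subsingleton.elim _ _)
        · by_cases hQi : IsIndecomposableModule R ↥Q
          · exact isSemisimple_of_isSimple (H Q hQi)
          · have hmaplt : ∀ A B : Submodule R ↥Q, IsCompl A B → B ≠ ⊥ →
                A.map Q.subtype < Q := by
              intro A B hAB hB0
              refine lt_of_le_of_ne (Submodule.map_subtype_le Q A) (fun h => hB0 ?_)
              have hA : A = ⊤ := by
                apply Submodule.map_injective_of_injective Q.injective_subtype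
                rw [h, Submodule.map_top, Submodule.range_subtype]
              rw [hA] at hAB
              exact disjoint_top.mp hAB.disjoint.symm
            have hnd : ∃ A B : Submodule R ↥Q, IsCompl A B ∧ A ≠ ⊥ ∧ B ≠ ⊥ := by
              by_contra hcon
              push_neg at hcon
              refine hQi ⟨hnt, fun A B hAB => ?_⟩
              by_cases hA : A = ⊥
              · exact Or.inl hA
              · exact Or.inr (hcon A B hAB hA)
            obtain ⟨A, B, hAB, hA0, hB0⟩ := hnd
            have hAlt := hmaplt A B hAB hB0
            have hBlt := hmaplt B A hAB.symm hA0
            have hsup : A.map Q.subtype ⊔ B.map Q.subtype = Q := by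
              rw [← Submodule.map_sup, codisjoint_iff.mp hAB.codisjoint,
                Submodule.map_top, Submodule.range_subtype]
            have := IsSemisimpleModule.sup (IH _ hAlt) (IH _ hBlt)
            rwa [hsup] at this
      haveI : IsSemisimpleModule R ↥(⊤ : Submodule R ↥W) := main ⊤
      have etop : ↥W ≃ₗ[R] ↥(⊤ : Submodule R ↥W) := Submodule.topEquiv.symm
      exact IsSemisimpleModule.congr (M := ↥(⊤ : Submodule R ↥W)) etop
    · rw [eq_top_iff]
      intro y _
      exact Submodule.mem_iSup_of_mem y (Submodule.mem_span_singleton_self y)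
  -- decompose N into simples and combine
  obtain ⟨T, hTind, hTtop, hTsimple⟩ :=
    IsSemisimpleModule.exists_sSupIndep_sSup_simples_eq_top R ↥N
  set T' := (Submodule.map N.subtype) '' T with hT'
  have hT'ind : sSupIndep T' := sSupIndep_map_subtype hTind
  have hT'sup : sSup T' = N := by
    rw [hT', map_sSup_subtype, hTtop, Submodule.map_top, Submodule.range_subtype]
  have hunion : sSupIndep (s₀ ∪ T') :=
    sSupIndep_union hs₀ind hT'ind (by rw [hT'sup]; exact hPN.disjoint)
  have hsupall : sSup (s₀ ∪ T') = ⊤ := by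
    rw [sSup_union, hT'sup]
    exact codisjoint_iff.mp hPN.codisjoint
  letI hdec : DecidableEq ↥(s₀ ∪ T') := fun a b => Classical.propDecidable _
  refine ⟨↥(s₀ ∪ T'), fun i => (i : Submodule R M), ?_, ?_⟩
  · rintro ⟨A, hA | hA⟩
    · exact (hs₀mem A hA).1
    · obtain ⟨B, hBT, rfl⟩ := hA
      haveI := hTsimple B hBT
      exact isIndecomposable_of_isSimple (IsSimpleModule.congr (N.equivSubtypeMap B).symm)
  · exact DirectSum.isInternal_submodule_of_iSupIndep_of_iSup_eq_top
      ((sSupIndep_iff _).mp hunion) (by rw [← sSup_eq_iSup']; exact hsupall)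
end

section
/- Let E = {[[a,b],[c,d]] ∈ M₂(A) : a, d ∈ A_e and b, c ∈ A_o}, a subring of M₂(A). Then M₂(A) is the internal direct sum, as a left E-module, of E and E·[[0,1],[1,0]]; in particular M₂(A) is a free left E-module of rank 2. -/
/-!
STATEMENT 12: Let `E = {[[a,b],[c,d]] ∈ M₂(A) : a,d ∈ A_e, b,c ∈ A_o}`, a subring of
`M₂(A)`.  Then `M₂(A)` is the internal direct sum, as a left `E`-module, of `E` and
`E·[[0,1],[1,0]]`; in particular `M₂(A)` is a free left `E`-module of rank `2` with
basis `{1, [[0,1],[1,0]]}`.  Equivalently: every `m ∈ M₂(A)` is *uniquely* of the form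
`m = a + b * [[0,1],[1,0]]` with `a, b ∈ E`.
-/

universe u

variable (k : Type u) [Field k]

/-- The ring `A = k[X₁,X₂]/(X₁X₂)`. -/
abbrev Aring : Type u :=
  MvPolynomial (Fin 2) k ⧸
    Ideal.span {(MvPolynomial.X 0 * MvPolynomial.X 1 : MvPolynomial (Fin 2) k)}

/-- The image of `Xᵢ` in `A` (for `i : Fin 2`). -/
noncomputable def xA (i : Fin 2) : Aring k :=
  Ideal.Quotient.mk _ (MvPolynomial.X i)

/-- `A_e`: the `k`-linear span of `{X₁^{2m}, X₂^{2m} : m ≥ 0}` in `A`. -/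
noncomputable def Ae : Submodule k (Aring k) :=
  Submodule.span k {a : Aring k | ∃ m : ℕ, a = xA k 0 ^ (2 * m) ∨ a = xA k 1 ^ (2 * m)}

/-- `A_o`: the `k`-linear span of `{X₁^{2m+1}, X₂^{2m+1} : m ≥ 0}` in `A`. -/
noncomputable def Ao : Submodule k (Aring k) :=
  Submodule.span k
    {a : Aring k | ∃ m : ℕ, a = xA k 0 ^ (2 * m + 1) ∨ a = xA k 1 ^ (2 * m + 1)}

set_option maxHeartbeats 1000000
set_option synthInstance.maxHeartbeats 1000000

open MvPolynomial

noncomputable abbrev mkA : MvPolynomial (Fin 2) k →+* Aring k := Ideal.Quotient.mk _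

lemma mkA_X_pow (i : Fin 2) (n : ℕ) : mkA k (X i ^ n) = xA k i ^ n := by
  simp [mkA, xA, map_pow]

lemma mkA_smul (a : k) (p : MvPolynomial (Fin 2) k) :
    mkA k (a • p) = a • mkA k p := by
  have h := map_smul (Ideal.Quotient.mkₐ k
    (Ideal.span {(MvPolynomial.X 0 * MvPolynomial.X 1 : MvPolynomial (Fin 2) k)})) a p
  exact h

/-- the "even single-variable monomial" selector -/
noncomputable def gfun (u : Fin 2 →₀ ℕ) : Aring k :=
  if (u 0 = 0 ∨ u 1 = 0) ∧ Even (u 0 + u 1) then mkA k (monomial u (1 : k)) else 0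

noncomputable def piE : MvPolynomial (Fin 2) k →ₗ[k] Aring k :=
  (basisMonomials (Fin 2) k).constr k (gfun k)

lemma piE_monomial (u : Fin 2 →₀ ℕ) (a : k) : piE k (monomial u a) = a • gfun k u := by
  have h : monomial u a = a • (basisMonomials (Fin 2) k u) := by
    rw [coe_basisMonomials]
    rw [smul_monomial, smul_eq_mul, mul_one]
  rw [h, map_smul, piE, Module.Basis.constr_basis]

lemma piE_X0X1_mul (r : MvPolynomial (Fin 2) k) : piE k (X 0 * X 1 * r) = 0 := by
  induction r using MvPolynomial.induction_on' with
  | monomial u a =>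
    have h : (X 0 * X 1 : MvPolynomial (Fin 2) k) * monomial u a
        = monomial (Finsupp.single 0 1 + Finsupp.single 1 1 + u) a := by
      rw [X, X, monomial_mul, monomial_mul, one_mul, one_mul]
    rw [h, piE_monomial, gfun, if_neg, smul_zero]
    rintro ⟨h01, -⟩
    rcases h01 with h0 | h1
    · simp [Finsupp.add_apply, Finsupp.single_apply] at h0
    · simp [Finsupp.add_apply, Finsupp.single_apply] at h1
  | add p q hp hq => rw [mul_add, map_add, hp, hq, add_zero]

lemma piE_congr {p q : MvPolynomial (Fin 2) k} (h : mkA k p = mkA k q) :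
    piE k p = piE k q := by
  have hd : X 0 * X 1 ∣ p - q := by
    rw [← Ideal.mem_span_singleton]
    exact Ideal.Quotient.eq.mp h
  obtain ⟨r, hr⟩ := hd
  have h2 : piE k p - piE k q = 0 := by rw [← map_sub, hr]; exact piE_X0X1_mul k r
  exact sub_eq_zero.mp h2

noncomputable def pre (x : Aring k) : MvPolynomial (Fin 2) k :=
  (Ideal.Quotient.mk_surjective x).choose

lemma pre_spec (x : Aring k) : mkA k (pre k x) = x :=
  (Ideal.Quotient.mk_surjective x).choose_spec

lemma piE_pre_single (i : Fin 2) (n : ℕ) :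
    piE k (pre k (xA k i ^ n)) = if Even n then xA k i ^ n else 0 := by
  have h1 : piE k (pre k (xA k i ^ n)) = piE k (X i ^ n) := by
    apply piE_congr
    rw [pre_spec, mkA_X_pow]
  rw [h1, X_pow_eq_monomial, piE_monomial, gfun]
  have hs : (Finsupp.single i n) 0 = 0 ∨ (Finsupp.single i n) 1 = 0 := by
    fin_cases i
    · right; simp
    · left; simp
  have hsum : (Finsupp.single i n) 0 + (Finsupp.single i n) 1 = n := by
    fin_cases i <;> simp
  by_cases he : Even n
  · rw [if_pos ⟨hs, by rw [hsum]; exact he⟩, if_pos he, one_smul, ← X_pow_eq_monomial,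
      mkA_X_pow]
  · rw [if_neg, if_neg he, smul_zero]
    rintro ⟨-, h2⟩
    rw [hsum] at h2
    exact he h2

lemma piE_pre_even : ∀ x ∈ Ae k, piE k (pre k x) = x := by
  intro x hx
  induction hx using Submodule.span_induction with
  | mem x hx =>
    obtain ⟨m, hm | hm⟩ := hx <;>
      · subst hm; rw [piE_pre_single]; rw [if_pos ⟨m, by ring⟩]
  | zero =>
    have : piE k (pre k (0 : Aring k)) = piE k 0 := piE_congr k (by rw [pre_spec]; simp)
    rw [this, map_zero]
  | add x y hx hy ihx ihy =>
    have : piE k (pre k (x + y)) = piE k (pre k x + pre k y) :=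
      piE_congr k (by rw [map_add, pre_spec, pre_spec, pre_spec])
    rw [this, map_add, ihx, ihy]
  | smul a x hx ih =>
    have : piE k (pre k (a • x)) = piE k (a • pre k x) :=
      piE_congr k (by rw [mkA_smul, pre_spec, pre_spec])
    rw [this, map_smul, ih]

lemma piE_pre_odd : ∀ x ∈ Ao k, piE k (pre k x) = 0 := by
  intro x hx
  induction hx using Submodule.span_induction with
  | mem x hx =>
    obtain ⟨m, hm | hm⟩ := hx <;>
      · subst hm; rw [piE_pre_single]
        rw [if_neg (by simp [Nat.even_add_one, parity_simps])]
  | zero =>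
    have : piE k (pre k (0 : Aring k)) = piE k 0 := piE_congr k (by rw [pre_spec]; simp)
    rw [this, map_zero]
  | add x y hx hy ihx ihy =>
    have : piE k (pre k (x + y)) = piE k (pre k x + pre k y) :=
      piE_congr k (by rw [map_add, pre_spec, pre_spec, pre_spec])
    rw [this, map_add, ihx, ihy, add_zero]
  | smul a x hx ih =>
    have : piE k (pre k (a • x)) = piE k (a • pre k x) :=
      piE_congr k (by rw [mkA_smul, pre_spec, pre_spec])
    rw [this, map_smul, ih, smul_zero]

lemma AeAo_disjoint {x : Aring k} (he : x ∈ Ae k) (ho : x ∈ Ao k) : x = 0 := by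
  rw [← piE_pre_even k x he, piE_pre_odd k x ho]

lemma mem_Ae_pow (i : Fin 2) (m : ℕ) : xA k i ^ (2 * m) ∈ Ae k := by
  apply Submodule.subset_span
  fin_cases i
  · exact ⟨m, Or.inl rfl⟩
  · exact ⟨m, Or.inr rfl⟩

lemma mem_Ao_pow (i : Fin 2) (m : ℕ) : xA k i ^ (2 * m + 1) ∈ Ao k := by
  apply Submodule.subset_span
  fin_cases i
  · exact ⟨m, Or.inl rfl⟩
  · exact ⟨m, Or.inr rfl⟩

lemma pow_mem_decomp (i : Fin 2) (n : ℕ) :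
    ∃ e ∈ Ae k, ∃ o ∈ Ao k, xA k i ^ n = e + o := by
  rcases Nat.even_or_odd n with ⟨r, hr⟩ | ⟨r, hr⟩
  · refine ⟨xA k i ^ n, ?_, 0, (Ao k).zero_mem, by rw [add_zero]⟩
    have h2 : n = 2 * r := by omega
    rw [h2]; exact mem_Ae_pow k i r
  · refine ⟨0, (Ae k).zero_mem, xA k i ^ n, ?_, by rw [zero_add]⟩
    rw [hr]; exact mem_Ao_pow k i r

lemma decomp_exists (x : Aring k) : ∃ e ∈ Ae k, ∃ o ∈ Ao k, x = e + o := by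
  obtain ⟨p, rfl⟩ := Ideal.Quotient.mk_surjective (I := Ideal.span
    {(MvPolynomial.X 0 * MvPolynomial.X 1 : MvPolynomial (Fin 2) k)}) x
  induction p using MvPolynomial.induction_on' with
  | monomial u a =>
    have hu : u = Finsupp.single 0 (u 0) + Finsupp.single 1 (u 1) := by
      ext i; fin_cases i <;> simp [Finsupp.single_apply]
    have hmon : monomial u (1:k) = X 0 ^ (u 0) * X 1 ^ (u 1) := by
      rw [X_pow_eq_monomial, X_pow_eq_monomial, monomial_mul, mul_one, ← hu]
    have hsm : mkA k (monomial u a) = a • mkA k (monomial u (1:k)) := by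
      rw [← mkA_smul, smul_monomial, smul_eq_mul, mul_one]
    by_cases h1 : u 1 = 0
    · have hx : mkA k (monomial u a) = a • xA k 0 ^ (u 0) := by
        rw [hsm, hmon, h1, pow_zero, mul_one, mkA_X_pow]
      obtain ⟨e, he, o, ho, hd⟩ := pow_mem_decomp k 0 (u 0)
      exact ⟨a • e, (Ae k).smul_mem a he, a • o, (Ao k).smul_mem a ho, by
        rw [hx, hd, smul_add]⟩
    · by_cases h0 : u 0 = 0
      · have hx : mkA k (monomial u a) = a • xA k 1 ^ (u 1) := by
          rw [hsm, hmon, h0, pow_zero, one_mul, mkA_X_pow]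
        obtain ⟨e, he, o, ho, hd⟩ := pow_mem_decomp k 1 (u 1)
        exact ⟨a • e, (Ae k).smul_mem a he, a • o, (Ao k).smul_mem a ho, by
          rw [hx, hd, smul_add]⟩
      · have hx : mkA k (monomial u a) = 0 := by
          rw [hsm, hmon]
          have : (X 0 ^ (u 0) * X 1 ^ (u 1) : MvPolynomial (Fin 2) k)
              = X 0 * X 1 * (X 0 ^ (u 0 - 1) * X 1 ^ (u 1 - 1)) := by
            rw [show u 0 = 1 + (u 0 - 1) by omega, show u 1 = 1 + (u 1 - 1) by omega]
            ring_nf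
            rw [show 1 + (u 0 - 1) - 1 = u 0 - 1 by omega,
              show 1 + (u 1 - 1) - 1 = u 1 - 1 by omega]
          rw [this]
          have hz : mkA k (X 0 * X 1 * (X 0 ^ (u 0 - 1) * X 1 ^ (u 1 - 1))) = 0 := by
            apply Ideal.Quotient.eq_zero_iff_mem.mpr
            exact Ideal.mul_mem_right _ _ (Ideal.subset_span rfl)
          rw [hz, smul_zero]
        exact ⟨0, (Ae k).zero_mem, 0, (Ao k).zero_mem, by rw [hx, add_zero]⟩
  | add p q hp hq =>
    obtain ⟨e1, he1, o1, ho1, h1⟩ := hp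
    obtain ⟨e2, he2, o2, ho2, h2⟩ := hq
    refine ⟨e1 + e2, (Ae k).add_mem he1 he2, o1 + o2, (Ao k).add_mem ho1 ho2, ?_⟩
    rw [map_add, h1, h2]; ring

lemma decomp_unique (x : Aring k) :
    ∃! p : Aring k × Aring k, (p.1 ∈ Ae k ∧ p.2 ∈ Ao k) ∧ x = p.1 + p.2 := by
  obtain ⟨e, he, o, ho, hd⟩ := decomp_exists k x
  refine ⟨(e, o), ⟨⟨he, ho⟩, hd⟩, ?_⟩
  rintro ⟨e', o'⟩ ⟨⟨he', ho'⟩, hd'⟩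
  have hz : e' - e = o - o' := by
    have h3 : e + o = e' + o' := hd ▸ hd'
    linear_combination -h3
  have hmem_e : e' - e ∈ Ae k := (Ae k).sub_mem he' he
  have hmem_o : e' - e ∈ Ao k := hz ▸ (Ao k).sub_mem ho ho'
  have h0 := AeAo_disjoint k hmem_e hmem_o
  have h0' : o - o' = 0 := hz ▸ h0
  have : e' = e := by linear_combination h0
  have : o' = o := by linear_combination -h0'
  simp_all

/-- The subring `E ⊆ M₂(A)`, as a set. -/
noncomputable def Eset : Set (Matrix (Fin 2) (Fin 2) (Aring k)) :=
  {m | m 0 0 ∈ Ae k ∧ m 1 1 ∈ Ae k ∧ m 0 1 ∈ Ao k ∧ m 1 0 ∈ Ao k}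

set_option synthInstance.maxHeartbeats 1000000 in
theorem stmt_12 (m : Matrix (Fin 2) (Fin 2) (Aring k)) :
    ∃! p : Matrix (Fin 2) (Fin 2) (Aring k) × Matrix (Fin 2) (Fin 2) (Aring k),
      (p.1 ∈ Eset k ∧ p.2 ∈ Eset k) ∧
      m = p.1 + p.2 * !![(0 : Aring k), 1; 1, 0] := by
  obtain ⟨⟨e00, o00⟩, ⟨⟨he00, ho00⟩, hd00⟩, hu00⟩ := decomp_unique k (m 0 0)
  obtain ⟨⟨e01, o01⟩, ⟨⟨he01, ho01⟩, hd01⟩, hu01⟩ := decomp_unique k (m 0 1)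
  obtain ⟨⟨e10, o10⟩, ⟨⟨he10, ho10⟩, hd10⟩, hu10⟩ := decomp_unique k (m 1 0)
  obtain ⟨⟨e11, o11⟩, ⟨⟨he11, ho11⟩, hd11⟩, hu11⟩ := decomp_unique k (m 1 1)
  simp only at hd00 hd01 hd10 hd11 he00 ho00 he01 ho01 he10 ho10 he11 ho11
  refine ⟨(!![e00, o01; o10, e11], !![e01, o00; o11, e10]), ⟨⟨?_, ?_⟩, ?_⟩, ?_⟩
  · refine ⟨?_, ?_, ?_, ?_⟩ <;> simp [Eset] <;> assumption
  · refine ⟨?_, ?_, ?_, ?_⟩ <;> simp [Eset] <;> assumption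
  · ext i j
    fin_cases i <;> fin_cases j <;>
      simp [Matrix.mul_apply, Fin.sum_univ_two]
    · exact hd00
    · rw [hd01]; ring
    · rw [hd10]; ring
    · exact hd11
  · rintro ⟨a', b'⟩ ⟨⟨ha, hb⟩, heq⟩
    obtain ⟨ha00, ha11, ha01, ha10⟩ := ha
    obtain ⟨hb00, hb11, hb01, hb10⟩ := hb
    have h00 : m 0 0 = a' 0 0 + b' 0 1 := by
      have h := congrFun (congrFun heq 0) 0
      simpa [Matrix.mul_apply, Fin.sum_univ_two] using h
    have h01 : m 0 1 = a' 0 1 + b' 0 0 := by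
      have h := congrFun (congrFun heq 0) 1
      simpa [Matrix.mul_apply, Fin.sum_univ_two] using h
    have h10 : m 1 0 = a' 1 0 + b' 1 1 := by
      have h := congrFun (congrFun heq 1) 0
      simpa [Matrix.mul_apply, Fin.sum_univ_two] using h
    have h11 : m 1 1 = a' 1 1 + b' 1 0 := by
      have h := congrFun (congrFun heq 1) 1
      simpa [Matrix.mul_apply, Fin.sum_univ_two] using h
    have u1 := Prod.ext_iff.mp (hu00 (a' 0 0, b' 0 1) ⟨⟨ha00, hb01⟩, h00⟩)
    have u2 := Prod.ext_iff.mp (hu01 (b' 0 0, a' 0 1) ⟨⟨hb00, ha01⟩, by rw [h01]; ring⟩)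
    have u3 := Prod.ext_iff.mp (hu10 (b' 1 1, a' 1 0) ⟨⟨hb11, ha10⟩, by rw [h10]; ring⟩)
    have u4 := Prod.ext_iff.mp (hu11 (a' 1 1, b' 1 0) ⟨⟨ha11, hb10⟩, h11⟩)
    obtain ⟨q1, q2⟩ := u1
    obtain ⟨q3, q4⟩ := u2
    obtain ⟨q5, q6⟩ := u3
    obtain ⟨q7, q8⟩ := u4
    simp only at q1 q2 q3 q4 q5 q6 q7 q8
    refine Prod.ext ?_ ?_ <;> dsimp only <;> ext i j <;> fin_cases i <;> fin_cases j <;>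
      simp only [Matrix.cons_val', Matrix.cons_val_zero, Matrix.cons_val_one,
        Matrix.head_cons, Matrix.empty_val', Matrix.cons_val_fin_one, Matrix.head_fin_const,
        Fin.zero_eta, Fin.mk_one] <;>
      first
        | exact q1 | exact q2 | exact q3 | exact q4
        | exact q5 | exact q6 | exact q7 | exact q8
end
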